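/- arXiv:1406.6395 — 6 statements merged into one kernel-verified Lean document; each statement's English description precedes it below -/
import Mathlib

section
/- If U_∞ is a Radon measure on ℝ₊^p satisfying the scaling property U_∞(c^{1/γ₁}x₁,…,c^{1/γ_p}x_p) = c·U_∞(x) for all c > 0 and x ∈ (0,∞)^p (with all γᵢ > 0), then the Laplace transform Û_∞(λ) = ∫ exp(-⟨λ,x⟩) dU_∞(x) is finite for every λ with all coordinates strictly positive. -/
/-!
Scaling with `c = 2ⁿ` shows that the box `Bₙ = ∏ᵢ [0, 2^{n/γᵢ}]` has mass `2ⁿ · U[0,1]`, which is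
finite since `U` is Radon. On `Bₙ₊₁ \ Bₙ` some coordinate exceeds `2^{n/γᵢ}`, so the integrand is at
most `∑ᵢ exp(-λᵢ 2^{n/γᵢ})`. This doubly exponential decay beats the geometric growth of the masses
of the boxes, and the resulting series converges by the ratio test.
-/

open MeasureTheory Filter Set
open scoped ENNReal

noncomputable def laplace {p : ℕ} (U : Measure (Fin p → ℝ)) (l : Fin p → ℝ) : ℝ≥0∞ :=
  ∫⁻ x, ENNReal.ofReal (Real.exp (-(∑ i, l i * x i))) ∂U

theorem summable_pow_mul_exp_neg_mul_pow {q r ε : ℝ} (hq : 0 < q) (hr : 1 < r) (hε : 0 < ε) :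
    Summable fun n : ℕ => q ^ n * Real.exp (-(ε * r ^ n)) := by
  refine summable_of_ratio_test_tendsto_lt_one zero_lt_one
    (Eventually.of_forall fun n => by positivity) ?_
  have hratio : ∀ n : ℕ, ‖q ^ (n + 1) * Real.exp (-(ε * r ^ (n + 1)))‖ /
      ‖q ^ n * Real.exp (-(ε * r ^ n))‖ = q * Real.exp (-(ε * (r - 1) * r ^ n)) := by
    intro n
    rw [Real.norm_of_nonneg (by positivity), Real.norm_of_nonneg (by positivity),
      div_eq_iff (by positivity), mul_mul_mul_comm, ← Real.exp_add]
    ring_nf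
  simp only [hratio]
  have hpow : Tendsto (fun n : ℕ => ε * (r - 1) * r ^ n) atTop atTop :=
    (tendsto_pow_atTop_atTop_of_one_lt hr).const_mul_atTop (by nlinarith)
  simpa using (Real.tendsto_exp_neg_atTop_nhds_zero.comp hpow).const_mul q

theorem lintegral_le_of_monotone_cover {α : Type*} [MeasurableSpace α] {μ : Measure α}
    {f : α → ℝ≥0∞} {B : ℕ → Set α} (hB : Monotone B) (hcover : ∀ᵐ x ∂μ, ∃ n, x ∈ B n)
    {C : ℝ≥0∞} (h₀ : ∀ x ∈ B 0, f x ≤ C) {c : ℕ → ℝ≥0∞}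
    (hc : ∀ n, ∀ x ∈ B (n + 1) \ B n, f x ≤ c n) :
    ∫⁻ x, f x ∂μ ≤ C * μ (B 0) + ∑' n, c n * μ (B (n + 1)) := by
  have hpiece : ∀ n, ∫⁻ x in disjointed B (n + 1), f x ∂μ ≤ c n * μ (B (n + 1)) := by
    intro n
    calc ∫⁻ x in disjointed B (n + 1), f x ∂μ ≤ ∫⁻ _ in disjointed B (n + 1), c n ∂μ :=
          setLIntegral_mono measurable_const (hB.disjointed_add_one n ▸ hc n)
      _ ≤ c n * μ (B (n + 1)) := by
          rw [setLIntegral_const]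
          gcongr
          exact disjointed_subset B _
  have hfirst : ∫⁻ x in disjointed B 0, f x ∂μ ≤ C * μ (B 0) := by
    calc ∫⁻ x in disjointed B 0, f x ∂μ ≤ ∫⁻ _ in B 0, C ∂μ := by
          rw [disjointed_zero]
          exact setLIntegral_mono measurable_const h₀
      _ = C * μ (B 0) := setLIntegral_const _ _
  calc ∫⁻ x, f x ∂μ = ∫⁻ x in ⋃ n, disjointed B n, f x ∂μ := by
        rw [iUnion_disjointed, Measure.restrict_eq_self_of_ae_mem (by simpa using hcover)]
    _ ≤ ∑' n, ∫⁻ x in disjointed B n, f x ∂μ := lintegral_iUnion_le _ _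
    _ = ∫⁻ x in disjointed B 0, f x ∂μ + ∑' n, ∫⁻ x in disjointed B (n + 1), f x ∂μ :=
        tsum_eq_zero_add' ENNReal.summable
    _ ≤ C * μ (B 0) + ∑' n, c n * μ (B (n + 1)) :=
        add_le_add hfirst (ENNReal.tsum_le_tsum hpiece)

theorem exp_neg_sum_mul_le_of_notMem_Icc {ι : Type*} [Fintype ι] {l b x : ι → ℝ}
    (hl : ∀ i, 0 ≤ l i) (hx₀ : 0 ≤ x) (hx : x ∉ Icc 0 b) :
    Real.exp (-∑ i, l i * x i) ≤ ∑ i, Real.exp (-(l i * b i)) := by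
  obtain ⟨i, hi⟩ : ∃ i, b i < x i := by
    by_contra! h
    exact hx ⟨hx₀, h⟩
  calc Real.exp (-∑ j, l j * x j) ≤ Real.exp (-(l i * b i)) := by
        gcongr
        calc l i * b i ≤ l i * x i := by gcongr; exact hl i
          _ ≤ ∑ j, l j * x j :=
            Finset.single_le_sum (fun j _ => mul_nonneg (hl j) (hx₀ j)) (Finset.mem_univ i)
    _ ≤ ∑ j, Real.exp (-(l j * b j)) :=
        Finset.single_le_sum (f := fun j => Real.exp (-(l j * b j)))
          (fun j _ => (Real.exp_pos _).le) (Finset.mem_univ i)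

theorem exists_le_pow_of_one_lt {ι : Type*} [Finite ι] {r : ι → ℝ} (hr : ∀ i, 1 < r i)
    (x : ι → ℝ) : ∃ n : ℕ, x ≤ fun i => r i ^ n :=
  (eventually_all.2 fun i =>
    (tendsto_pow_atTop_atTop_of_one_lt (hr i)).eventually_ge_atTop (x i)).exists

theorem summable_pow_mul_sum_exp_neg_mul_pow {ι : Type*} [Fintype ι] {q : ℝ} {l r : ι → ℝ}
    (hq : 0 < q) (hr : ∀ i, 1 < r i) (hl : ∀ i, 0 < l i) :
    Summable fun n : ℕ => q ^ n * ∑ i, Real.exp (-(l i * r i ^ n)) := by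
  simp only [Finset.mul_sum]
  exact summable_sum fun i _ => summable_pow_mul_exp_neg_mul_pow hq (hr i) (hl i)

theorem measure_Icc_rpow_pow_of_scaling {ι : Type*} {U : Measure (ι → ℝ)} {γ : ι → ℝ}
    (hscale : ∀ c : ℝ, 0 < c → ∀ x : ι → ℝ, (∀ i, 0 < x i) →
      U (Icc 0 fun i => c ^ (1 / γ i) * x i) = ENNReal.ofReal c * U (Icc 0 x))
    {c : ℝ} (hc : 0 < c) (n : ℕ) :
    U (Icc 0 fun i => (c ^ (1 / γ i)) ^ n) = ENNReal.ofReal (c ^ n) * U (Icc 0 1) := by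
  simpa [Real.rpow_pow_comm hc.le] using hscale (c ^ n) (by positivity) 1 fun _ => one_pos

/-- If the Radon measure `Uinf` on `ℝ₊^p` satisfies the scaling property
`Uinf[0, c^{1/γ}x] = c · Uinf[0,x]` for all `c > 0`, `x ∈ (0,∞)^p` (all `γᵢ > 0`), then its
Laplace transform is finite at every strictly positive argument. -/
theorem stmt4 {p : ℕ} (Uinf : Measure (Fin p → ℝ))
    (hsupp : Uinf {x | ∃ i, x i < 0} = 0)
    (hRadon : ∀ K : Set (Fin p → ℝ), IsCompact K → Uinf K < ⊤)
    (γ : Fin p → ℝ) (hγ : ∀ i, 0 < γ i)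
    (hscale : ∀ c : ℝ, 0 < c → ∀ x : Fin p → ℝ, (∀ i, 0 < x i) →
      Uinf (Set.Icc 0 (fun i => c ^ (1 / γ i) * x i)) = ENNReal.ofReal c * Uinf (Set.Icc 0 x)) :
    ∀ l : Fin p → ℝ, (∀ i, 0 < l i) → laplace Uinf l < ⊤ := by
  intro l hl
  set r : Fin p → ℝ := fun i => 2 ^ (1 / γ i)
  set B : ℕ → Set (Fin p → ℝ) := fun n => Icc 0 fun i => r i ^ n
  set s : ℕ → ℝ := fun n => ∑ i, Real.exp (-(l i * r i ^ n))
  have hr (i : Fin p) : 1 < r i := Real.one_lt_rpow one_lt_two (one_div_pos.2 (hγ i))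
  have hB : Monotone B := fun m n hmn =>
    Icc_subset_Icc le_rfl fun i => pow_le_pow_right₀ (hr i).le hmn
  have hmeasure := measure_Icc_rpow_pow_of_scaling hscale two_pos
  have hcover : ∀ᵐ x ∂Uinf, ∃ n, x ∈ B n := by
    filter_upwards [measure_eq_zero_iff_ae_notMem.1 hsupp] with x hx
    simp only [not_exists, not_lt] at hx
    exact (exists_le_pow_of_one_lt hr x).imp fun n hn => ⟨hx, hn⟩
  have hbound := lintegral_le_of_monotone_cover (μ := Uinf)
    (f := fun x => ENNReal.ofReal (Real.exp (-∑ i, l i * x i))) hB hcover (C := 1)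
    (fun x hx => ENNReal.ofReal_le_one.2 <| Real.exp_le_one_iff.2 <| neg_nonpos.2 <|
      Finset.sum_nonneg fun i _ => mul_nonneg (hl i).le (hx.1 i))
    (c := fun n => ENNReal.ofReal (s n))
    (fun n x hx => ENNReal.ofReal_le_ofReal <|
      exp_neg_sum_mul_le_of_notMem_Icc (fun i => (hl i).le) hx.1.1 hx.2)
  have hs : Summable fun n => s n * 2 ^ (n + 1) :=
    ((summable_pow_mul_sum_exp_neg_mul_pow two_pos hr hl).mul_left 2).congr fun n => by ring
  have htail : ∑' n, ENNReal.ofReal (s n) * Uinf (B (n + 1))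
      = ENNReal.ofReal (∑' n, s n * 2 ^ (n + 1)) * Uinf (Icc 0 1) := by
    rw [ENNReal.ofReal_tsum_of_nonneg (fun n => by positivity) hs, ← ENNReal.tsum_mul_right]
    refine tsum_congr fun n => ?_
    rw [hmeasure, ← mul_assoc, ← ENNReal.ofReal_mul (by positivity)]
  have hM := hRadon _ (isCompact_Icc (a := (0 : Fin p → ℝ)) (b := 1))
  refine hbound.trans_lt ?_
  rw [htail, hmeasure 0, pow_zero, ENNReal.ofReal_one, one_mul, one_mul]
  exact ENNReal.add_lt_top.2 ⟨hM, ENNReal.mul_lt_top ENNReal.ofReal_lt_top hM⟩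
end

section
/- A Radon measure U_∞ on ℝ₊^p with the scaling property U_∞(c^{1/γ₁}x₁,…,c^{1/γ_p}x_p) = c·U_∞(x) for all c > 0 has the property that every point x ∈ (0,∞)^p is a continuity point of the distribution function x ↦ U_∞([0,x]). -/
open MeasureTheory Filter Set Topology
open scoped ENNReal

/-!
Write `F y = Uinf [0, y]` and `x_c = (c^{1/γ₁} x₁, …, c^{1/γ_p} x_p)`. For `c < 1 < d` the box
`(x_c, x_d)` is a neighbourhood of `x`, and on it the monotone function `F` is squeezed between
`F x_c = c F x` and `F x_d = d F x`; letting `c, d → 1` gives continuity.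
-/

section Dilation

variable {ι : Type*} {γ : ι → ℝ} {x : ι → ℝ} {c : ℝ} {i : ι}

theorem rpow_one_div_mul_lt_self (hγ : 0 < γ i) (hx : 0 < x i) (hc₀ : 0 < c) (hc₁ : c < 1) :
    c ^ (1 / γ i) * x i < x i :=
  mul_lt_of_lt_one_left hx (Real.rpow_lt_one hc₀.le hc₁ (one_div_pos.2 hγ))

theorem lt_rpow_one_div_mul_self (hγ : 0 < γ i) (hx : 0 < x i) (hc : 1 < c) :
    x i < c ^ (1 / γ i) * x i :=
  lt_mul_of_one_lt_left hx (Real.one_lt_rpow hc (one_div_pos.2 hγ))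

variable [Finite ι]

theorem eventually_rpow_one_div_mul_le (hγ : ∀ i, 0 < γ i) (hx : ∀ i, 0 < x i) (hc₀ : 0 < c)
    (hc₁ : c < 1) : ∀ᶠ y in 𝓝 x, (fun i => c ^ (1 / γ i) * x i) ≤ y := by
  rw [nhds_pi]
  exact eventually_pi fun i =>
    (eventually_gt_nhds (rpow_one_div_mul_lt_self (hγ i) (hx i) hc₀ hc₁)).mono fun _ h => h.le

theorem eventually_le_rpow_one_div_mul (hγ : ∀ i, 0 < γ i) (hx : ∀ i, 0 < x i) (hc : 1 < c) :
    ∀ᶠ y in 𝓝 x, y ≤ fun i => c ^ (1 / γ i) * x i := by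
  rw [nhds_pi]
  exact eventually_pi fun i =>
    (eventually_lt_nhds (lt_rpow_one_div_mul_self (hγ i) (hx i) hc)).mono fun _ h => h.le

theorem Monotone.continuousAt_of_quasi_homogeneous {F : (ι → ℝ) → ℝ≥0∞} (hF : Monotone F)
    (hγ : ∀ i, 0 < γ i) (hx : ∀ i, 0 < x i)
    (hscale : ∀ c : ℝ, 0 < c → F (fun i => c ^ (1 / γ i) * x i) = ENNReal.ofReal c * F x) :
    ContinuousAt F x := by
  have hlim : Tendsto (fun c => ENNReal.ofReal c * F x) (𝓝 1) (𝓝 (F x)) := by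
    simpa using ENNReal.Tendsto.mul_const (ENNReal.tendsto_ofReal (tendsto_id (x := 𝓝 (1 : ℝ))))
      (Or.inl (by simp))
  refine tendsto_order.2 ⟨fun a ha => ?_, fun b hb => ?_⟩
  · obtain ⟨c, hac, hc₀, hc₁⟩ :=
      ((hlim.mono_left (nhdsWithin_le_nhds (s := Iio 1))).eventually (lt_mem_nhds ha) |>.and
        (Ioo_mem_nhdsLT zero_lt_one)).exists
    filter_upwards [eventually_rpow_one_div_mul_le hγ hx hc₀ hc₁] with y hy
    exact hac.trans_le ((hscale c hc₀).symm.trans_le (hF hy))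
  · obtain ⟨d, hdb, hd₁⟩ :=
      ((hlim.mono_left (nhdsWithin_le_nhds (s := Ioi 1))).eventually (gt_mem_nhds hb) |>.and
        self_mem_nhdsWithin).exists
    filter_upwards [eventually_le_rpow_one_div_mul hγ hx hd₁] with y hy
    exact ((hF hy).trans_eq (hscale d (zero_lt_one.trans hd₁))).trans_lt hdb

end Dilation

theorem stmt5_general {p : ℕ} (Uinf : Measure (Fin p → ℝ))
    (hRadon : ∀ K : Set (Fin p → ℝ), IsCompact K → Uinf K < ⊤)
    (γ : Fin p → ℝ) (hγ : ∀ i, 0 < γ i)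
    (hscale : ∀ c : ℝ, 0 < c → ∀ x : Fin p → ℝ, (∀ i, 0 < x i) →
      Uinf (Set.Icc 0 (fun i => c ^ (1 / γ i) * x i)) = ENNReal.ofReal c * Uinf (Set.Icc 0 x)) :
    ∀ x : Fin p → ℝ, (∀ i, 0 < x i) →
      ContinuousAt (fun y : Fin p → ℝ => (Uinf (Set.Icc 0 y)).toReal) x := by
  intro x hx
  have hmono : Monotone fun y : Fin p → ℝ => Uinf (Set.Icc 0 y) :=
    fun _ _ h => measure_mono (Set.Icc_subset_Icc_right h)
  exact (ENNReal.continuousAt_toReal (hRadon (Set.Icc 0 x) isCompact_Icc).ne).comp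
    (f := fun y => Uinf (Set.Icc 0 y))
    (hmono.continuousAt_of_quasi_homogeneous hγ hx fun c hc => hscale c hc x hx)

/-- A Radon measure `Uinf` on `ℝ₊^p` with the scaling property
`Uinf[0, c^{1/γ}x] = c · Uinf[0,x]` for all `c > 0` has the property that every
`x ∈ (0,∞)^p` is a continuity point of the distribution function `x ↦ Uinf[0,x]`. -/
theorem stmt5 {p : ℕ} (Uinf : Measure (Fin p → ℝ))
    (hsupp : Uinf {x | ∃ i, x i < 0} = 0)
    (hRadon : ∀ K : Set (Fin p → ℝ), IsCompact K → Uinf K < ⊤)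
    (γ : Fin p → ℝ) (hγ : ∀ i, 0 < γ i)
    (hscale : ∀ c : ℝ, 0 < c → ∀ x : Fin p → ℝ, (∀ i, 0 < x i) →
      Uinf (Set.Icc 0 (fun i => c ^ (1 / γ i) * x i)) = ENNReal.ofReal c * Uinf (Set.Icc 0 x)) :
    ∀ x : Fin p → ℝ, (∀ i, 0 < x i) →
      ContinuousAt (fun y : Fin p → ℝ => (Uinf (Set.Icc 0 y)).toReal) x :=
  stmt5_general Uinf hRadon γ hγ hscale
end

section
/- (Abelian direction of the multivariate Tauberian theorem) Suppose U is a measure on ℝ₊^p with finite Laplace transform at all strictly positive arguments, bᵢ(t) ∈ RV_{1/γᵢ} with γᵢ > 0, Uₜ := (1/t)U(b(t)·) converges vaguely in M₊(ℝ₊^p) to a nonzero Radon measure U_∞, and the uniform integrability condition lim_{y→∞} limsup_{t→∞} ∫_{∪ᵢ{vᵢ>y}} exp(-∑ᵢ vᵢ/xᵢ) Uₜ(dv) = 0 holds for all x > 0. Then (1/t)·Û(1/(b(t)x)) → Û_∞(1/x) for all x > 0 componentwise, where Û denotes the Laplace transform and 1/x is componentwise reciprocal. -/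
/-!
Write `(1/t) Û(1/(b(t)x)) = ∫ exp(-∑ᵢ vᵢ/xᵢ) Uₜ(dv)`. Cutting the integrand off continuously
outside the ball of radius `n` gives compactly supported test functions, so vague convergence
handles the truncated integrals, and as `n → ∞` their limits increase to
`∫ exp(-∑ᵢ vᵢ/xᵢ) U_∞(dv) = Û_∞(1/x)` by monotone convergence; this bounds the `liminf` from
below. The discarded mass lies outside the ball, hence (as `Uₜ` does not charge the negative
orthant) where some coordinate exceeds `n`, and the uniform integrability condition makes its
`limsup` vanish as `n → ∞`; this bounds the `limsup` from above.
-/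

open MeasureTheory Filter Set
open scoped ENNReal

def VagueTendsto {ι E : Type*} [MeasurableSpace E] [TopologicalSpace E]
    (μ : ι → Measure E) (l : Filter ι) (ν : Measure E) : Prop :=
  ∀ f : E → ℝ, Continuous f → HasCompactSupport f →
    Filter.Tendsto (fun i => ∫ x, f x ∂(μ i)) l (nhds (∫ x, f x ∂ν))

def RegVarying (b : ℝ → ℝ) (ρ : ℝ) : Prop :=
  (∀ᶠ t in Filter.atTop, 0 < b t) ∧
    ∀ c : ℝ, 0 < c →
      Filter.Tendsto (fun t => b (c * t) / b t) Filter.atTop (nhds (c ^ ρ))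

/-- The rescaled measure `Uₜ = (1/t) U(b(t)·)`. -/
noncomputable def rescaled {p : ℕ} (U : Measure (Fin p → ℝ)) (b : Fin p → ℝ → ℝ)
    (t : ℝ) : Measure (Fin p → ℝ) :=
  (ENNReal.ofReal t)⁻¹ • Measure.map (fun v i => v i / b i t) U

open Topology

namespace ENNReal

variable {ι : Type*} {l : Filter ι} [l.NeBot]

theorem limsup_add_le_of_tendsto {u v : ι → ℝ≥0∞} {a : ℝ≥0∞} (hu : Tendsto u l (𝓝 a)) :
    limsup (u + v) l ≤ a + limsup v l := by
  refine ENNReal.le_of_forall_pos_le_add fun ε hε hfin => ?_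
  have ha : a < a + ε :=
    ENNReal.lt_add_right (lt_of_le_of_lt le_self_add hfin).ne (by simpa using hε.ne')
  calc limsup (u + v) l ≤ limsup (fun t => (a + ε) + v t) l :=
        limsup_le_limsup ((hu.eventually_lt_const ha).mono fun t ht => add_le_add ht.le le_rfl)
    _ = a + ε + limsup v l := limsup_const_add l v _ (by isBoundedDefault) (by isBoundedDefault)
    _ = a + limsup v l + ε := add_right_comm _ _ _

theorem tendsto_of_approx {L : ι → ℝ≥0∞} {a : ℝ≥0∞} {G T : ℕ → ι → ℝ≥0∞} {b : ℕ → ℝ≥0∞}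
    (hG : ∀ n, Tendsto (G n) l (𝓝 (b n))) (hb : Tendsto b atTop (𝓝 a))
    (hGL : ∀ n, ∀ᶠ t in l, G n t ≤ L t) (hLGT : ∀ n, ∀ᶠ t in l, L t ≤ G n t + T n t)
    (hT : Tendsto (fun n => limsup (T n) l) atTop (𝓝 0)) :
    Tendsto L l (𝓝 a) := by
  refine tendsto_of_le_liminf_of_limsup_le ?_ ?_
  · refine le_of_tendsto' hb fun n => ?_
    rw [← (hG n).liminf_eq]
    exact liminf_le_liminf (hGL n)
  · refine ge_of_tendsto' (by simpa using hb.add hT) fun n => ?_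
    exact (limsup_le_limsup (hLGT n)).trans (limsup_add_le_of_tendsto (hG n))

end ENNReal

section Cutoff

variable {E : Type*} [NormedAddCommGroup E]

def normCutoff (n : ℕ) (v : E) : ℝ := min 1 (max 0 (n + 1 - ‖v‖))

theorem continuous_normCutoff (n : ℕ) : Continuous (normCutoff (E := E) n) :=
  continuous_const.min (continuous_const.max (continuous_const.sub continuous_norm))

theorem normCutoff_nonneg (n : ℕ) (v : E) : 0 ≤ normCutoff n v :=
  le_min zero_le_one (le_max_left _ _)

theorem normCutoff_le_one (n : ℕ) (v : E) : normCutoff n v ≤ 1 :=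
  min_le_left _ _

theorem normCutoff_eq_one {n : ℕ} {v : E} (hv : ‖v‖ ≤ n) : normCutoff n v = 1 :=
  min_eq_left (le_max_of_le_right (by linarith))

theorem normCutoff_eq_zero {n : ℕ} {v : E} (hv : n + 1 ≤ ‖v‖) : normCutoff n v = 0 := by
  rw [normCutoff, max_eq_left (by linarith), min_eq_right zero_le_one]

theorem monotone_normCutoff (v : E) : Monotone fun n : ℕ => normCutoff n v := by
  refine monotone_nat_of_le_succ fun n => min_le_min le_rfl (max_le_max le_rfl ?_)
  push_cast
  linarith

theorem tendsto_normCutoff (v : E) : Tendsto (fun n : ℕ => normCutoff n v) atTop (𝓝 1) :=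
  tendsto_const_nhds.congr' <| (eventually_ge_atTop ⌈‖v‖⌉₊).mono fun _ hn =>
    (normCutoff_eq_one ((Nat.le_ceil _).trans (by exact_mod_cast hn))).symm

theorem hasCompactSupport_mul_normCutoff [ProperSpace E] (f : E → ℝ) (n : ℕ) :
    HasCompactSupport fun v => f v * normCutoff n v := by
  refine HasCompactSupport.intro (isCompact_closedBall (0 : E) (n + 1)) fun v hv => ?_
  rw [Metric.mem_closedBall, dist_zero_right, not_le] at hv
  rw [normCutoff_eq_zero hv.le, mul_zero]

end Cutoff

namespace VagueTendsto

theorem tendsto_lintegral_of_hasCompactSupport {ι E : Type*} [MeasurableSpace E]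
    [TopologicalSpace E] [OpensMeasurableSpace E] {μ : ι → Measure E} {l : Filter ι}
    {ν : Measure E} [IsFiniteMeasureOnCompacts ν] (h : VagueTendsto μ l ν) {g : E → ℝ}
    (hg : Continuous g) (hgc : HasCompactSupport g) (hg0 : 0 ≤ g)
    (hfin : ∀ᶠ i in l, ∫⁻ x, ENNReal.ofReal (g x) ∂μ i ≠ ∞) :
    Tendsto (fun i => ∫⁻ x, ENNReal.ofReal (g x) ∂μ i) l
      (𝓝 (∫⁻ x, ENNReal.ofReal (g x) ∂ν)) := by
  rw [← ofReal_integral_eq_lintegral_ofReal (hg.integrable_of_hasCompactSupport hgc)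
    (.of_forall hg0)]
  refine ((ENNReal.continuous_ofReal.tendsto _).comp (h g hg hgc)).congr' ?_
  filter_upwards [hfin] with i hi
  rw [Function.comp_apply, integral_eq_lintegral_of_nonneg_ae (.of_forall hg0)
    hg.aestronglyMeasurable, ENNReal.ofReal_toReal hi]

theorem tendsto_lintegral_of_tail {ι E : Type*} [NormedAddCommGroup E] [ProperSpace E]
    [MeasurableSpace E] [OpensMeasurableSpace E] {μ : ι → Measure E} {l : Filter ι} [l.NeBot]
    {ν : Measure E} [IsFiniteMeasureOnCompacts ν] (h : VagueTendsto μ l ν) {f : E → ℝ}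
    (hf : Continuous f) (hf0 : 0 ≤ f)
    (hfin : ∀ᶠ i in l, ∫⁻ x, ENNReal.ofReal (f x) ∂μ i ≠ ∞)
    (htail : Tendsto (fun n : ℕ => limsup
      (fun i => ∫⁻ x in {x | (n : ℝ) < ‖x‖}, ENNReal.ofReal (f x) ∂μ i) l) atTop (𝓝 0)) :
    Tendsto (fun i => ∫⁻ x, ENNReal.ofReal (f x) ∂μ i) l
      (𝓝 (∫⁻ x, ENNReal.ofReal (f x) ∂ν)) := by
  set g : ℕ → E → ℝ := fun n x => f x * normCutoff n x
  have hg_cont (n : ℕ) : Continuous (g n) := hf.mul (continuous_normCutoff n)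
  have hg_le (n : ℕ) (x : E) : ENNReal.ofReal (g n x) ≤ ENNReal.ofReal (f x) :=
    ENNReal.ofReal_le_ofReal (mul_le_of_le_one_right (hf0 x) (normCutoff_le_one n x))
  have hg_lim (n : ℕ) : Tendsto (fun i => ∫⁻ x, ENNReal.ofReal (g n x) ∂μ i) l
      (𝓝 (∫⁻ x, ENNReal.ofReal (g n x) ∂ν)) := by
    refine h.tendsto_lintegral_of_hasCompactSupport (hg_cont n)
      (hasCompactSupport_mul_normCutoff f n) (fun x => mul_nonneg (hf0 x) (normCutoff_nonneg n x)) ?_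
    filter_upwards [hfin] with i hi
    exact ne_top_of_le_ne_top hi (lintegral_mono (hg_le n))
  have hg_mono : Tendsto (fun n => ∫⁻ x, ENNReal.ofReal (g n x) ∂ν) atTop
      (𝓝 (∫⁻ x, ENNReal.ofReal (f x) ∂ν)) := by
    refine lintegral_tendsto_of_tendsto_of_monotone
      (fun n => (hg_cont n).measurable.ennreal_ofReal.aemeasurable)
      (.of_forall fun x n m hnm => ?_) (.of_forall fun x => ?_)
    · exact ENNReal.ofReal_le_ofReal
        (mul_le_mul_of_nonneg_left (monotone_normCutoff x hnm) (hf0 x))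
    · simpa [g, Function.comp_def] using (ENNReal.continuous_ofReal.tendsto _).comp
        ((tendsto_normCutoff x).const_mul (f x))
  have hsplit (n : ℕ) (i : ι) : ∫⁻ x, ENNReal.ofReal (f x) ∂μ i ≤
      ∫⁻ x, ENNReal.ofReal (g n x) ∂μ i +
        ∫⁻ x in {x | (n : ℝ) < ‖x‖}, ENNReal.ofReal (f x) ∂μ i := by
    rw [← lintegral_indicator (measurableSet_lt measurable_const measurable_norm),
      ← lintegral_add_left (hg_cont n).measurable.ennreal_ofReal]
    refine lintegral_mono fun x => ?_
    by_cases hx : ‖x‖ ≤ n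
    · simp [g, normCutoff_eq_one hx]
    · rw [indicator_of_mem (show x ∈ {x | (n : ℝ) < ‖x‖} from not_le.mp hx)]
      exact le_add_self
  exact ENNReal.tendsto_of_approx hg_lim hg_mono
    (fun n => .of_forall fun i => lintegral_mono (hg_le n)) (fun n => .of_forall (hsplit n)) htail

end VagueTendsto

section Orthant

variable {p : ℕ}

theorem setLIntegral_norm_gt_le {μ : Measure (Fin p → ℝ)} (hμ : μ {v | ∃ i, v i < 0} = 0)
    (F : (Fin p → ℝ) → ℝ≥0∞) {y : ℝ} (hy : 0 ≤ y) :
    ∫⁻ v in {v | y < ‖v‖}, F v ∂μ ≤ ∫⁻ v in {v | ∃ i, y < v i}, F v ∂μ := by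
  have hsub : {v : Fin p → ℝ | y < ‖v‖} ⊆ {v | ∃ i, y < v i} ∪ {v | ∃ i, v i < 0} := by
    intro v hv
    obtain ⟨i, hi⟩ : ∃ i, y < |v i| := by
      simpa using (pi_norm_le_iff_of_nonneg hy).not.mp (not_le.mpr hv)
    rcases lt_abs.mp hi with hi | hi
    · exact Or.inl ⟨i, hi⟩
    · exact Or.inr ⟨i, by linarith⟩
  calc ∫⁻ v in {v | y < ‖v‖}, F v ∂μ
      ≤ ∫⁻ v in {v | ∃ i, y < v i} ∪ {v | ∃ i, v i < 0}, F v ∂μ := lintegral_mono_set hsub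
    _ ≤ ∫⁻ v in {v | ∃ i, y < v i}, F v ∂μ + ∫⁻ v in {v | ∃ i, v i < 0}, F v ∂μ :=
      lintegral_union_le _ _ _
    _ = ∫⁻ v in {v | ∃ i, y < v i}, F v ∂μ := by rw [setLIntegral_measure_zero _ _ hμ, add_zero]

theorem rescaled_setOf_exists_neg_eq_zero {U : Measure (Fin p → ℝ)}
    (hU : U {v | ∃ i, v i < 0} = 0) {b : Fin p → ℝ → ℝ} {t : ℝ} (hb : ∀ i, 0 ≤ b i t) :
    rescaled U b t {v | ∃ i, v i < 0} = 0 := by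
  have hN : MeasurableSet {v : Fin p → ℝ | ∃ i, v i < 0} := by
    simp only [ofPred_exists]
    exact .iUnion fun i => measurableSet_lt (measurable_pi_apply i) measurable_const
  rw [rescaled, Measure.smul_apply, Measure.map_apply (by fun_prop) hN]
  refine smul_eq_zero_of_right _ (measure_mono_null (fun v hv => ?_) hU)
  obtain ⟨i, hi⟩ := hv
  exact ⟨i, by_contra fun h => hi.not_ge (div_nonneg (not_lt.mp h) (hb i))⟩

theorem lintegral_rescaled {U : Measure (Fin p → ℝ)} {b : Fin p → ℝ → ℝ} {t : ℝ}
    {F : (Fin p → ℝ) → ℝ≥0∞} (hF : Measurable F) :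
    ∫⁻ v, F v ∂rescaled U b t = (ENNReal.ofReal t)⁻¹ * ∫⁻ v, F (fun i => v i / b i t) ∂U := by
  rw [rescaled, lintegral_smul_measure, lintegral_map hF (by fun_prop), smul_eq_mul]

theorem laplace_one_div (U : Measure (Fin p → ℝ)) (x : Fin p → ℝ) :
    laplace U (fun i => 1 / x i) = ∫⁻ v, ENNReal.ofReal (Real.exp (-(∑ i, v i / x i))) ∂U := by
  simp only [laplace, one_div_mul_eq_div]

theorem lintegral_exp_rescaled (U : Measure (Fin p → ℝ)) (b : Fin p → ℝ → ℝ) (t : ℝ)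
    (x : Fin p → ℝ) :
    ∫⁻ v, ENNReal.ofReal (Real.exp (-(∑ i, v i / x i))) ∂rescaled U b t
      = (ENNReal.ofReal t)⁻¹ * laplace U (fun i => 1 / (b i t * x i)) := by
  rw [lintegral_rescaled (by fun_prop), laplace_one_div]
  simp only [div_div]

end Orthant

theorem stmt9_general {p : ℕ} (U Uinf : Measure (Fin p → ℝ))
    (hsupp : U {x | ∃ i, x i < 0} = 0)
    (hfin : ∀ l : Fin p → ℝ, (∀ i, 0 < l i) → laplace U l < ⊤)
    (γ : Fin p → ℝ)
    (b : Fin p → ℝ → ℝ) (hb : ∀ i, RegVarying (b i) (1 / γ i))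
    (hRadonInf : ∀ K : Set (Fin p → ℝ), IsCompact K → Uinf K < ⊤)
    (hvague : VagueTendsto (rescaled U b) Filter.atTop Uinf)
    (hUI : ∀ x : Fin p → ℝ, (∀ i, 0 < x i) →
      Filter.Tendsto
        (fun y : ℝ => Filter.limsup
          (fun t => ∫⁻ v in {v : Fin p → ℝ | ∃ i, y < v i},
            ENNReal.ofReal (Real.exp (-(∑ i, v i / x i))) ∂(rescaled U b t))
          Filter.atTop)
        Filter.atTop (nhds 0)) :
    ∀ x : Fin p → ℝ, (∀ i, 0 < x i) →
      Filter.Tendsto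
        (fun t => (ENNReal.ofReal t)⁻¹ * laplace U (fun i => 1 / (b i t * x i)))
        Filter.atTop (nhds (laplace Uinf (fun i => 1 / x i))) := by
  intro x hx
  have : IsFiniteMeasureOnCompacts Uinf := ⟨fun {K} hK => hRadonInf K hK⟩
  have hb_pos : ∀ᶠ t in atTop, 0 < t ∧ ∀ i, 0 < b i t :=
    (eventually_gt_atTop 0).and (eventually_all.mpr fun i => (hb i).1)
  simp_rw [← lintegral_exp_rescaled, laplace_one_div]
  refine hvague.tendsto_lintegral_of_tail (by fun_prop) (fun v => (Real.exp_pos _).le) ?_ ?_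
  · filter_upwards [hb_pos] with t ⟨ht, hbt⟩
    rw [lintegral_exp_rescaled]
    exact ENNReal.mul_ne_top (ENNReal.inv_ne_top.mpr (ENNReal.ofReal_pos.mpr ht).ne')
      (hfin _ fun i => one_div_pos.mpr (mul_pos (hbt i) (hx i))).ne
  · refine tendsto_of_tendsto_of_tendsto_of_le_of_le tendsto_const_nhds
      ((hUI x hx).comp tendsto_natCast_atTop_atTop) (fun n => zero_le) fun n => ?_
    refine limsup_le_limsup ?_
    filter_upwards [hb_pos] with t ⟨_, hbt⟩
    exact setLIntegral_norm_gt_le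
      (rescaled_setOf_exists_neg_eq_zero hsupp fun i => (hbt i).le) _ n.cast_nonneg

/-- Abelian direction: if `U` has finite Laplace transform at strictly positive arguments,
`Uₜ = (1/t)U(b(t)·)` converges vaguely to a nonzero Radon measure `Uinf`, and the uniform
integrability condition holds, then `(1/t)·Û(1/(b(t)x)) → Û∞(1/x)` for all `x > 0`. -/
theorem stmt9 {p : ℕ} (U Uinf : Measure (Fin p → ℝ))
    (hsupp : U {x | ∃ i, x i < 0} = 0)
    (hfin : ∀ l : Fin p → ℝ, (∀ i, 0 < l i) → laplace U l < ⊤)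
    (γ : Fin p → ℝ) (hγ : ∀ i, 0 < γ i)
    (b : Fin p → ℝ → ℝ) (hb : ∀ i, RegVarying (b i) (1 / γ i))
    (hne : Uinf ≠ 0)
    (hRadonInf : ∀ K : Set (Fin p → ℝ), IsCompact K → Uinf K < ⊤)
    (hvague : VagueTendsto (rescaled U b) Filter.atTop Uinf)
    (hUI : ∀ x : Fin p → ℝ, (∀ i, 0 < x i) →
      Filter.Tendsto
        (fun y : ℝ => Filter.limsup
          (fun t => ∫⁻ v in {v : Fin p → ℝ | ∃ i, y < v i},
            ENNReal.ofReal (Real.exp (-(∑ i, v i / x i))) ∂(rescaled U b t))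
          Filter.atTop)
        Filter.atTop (nhds 0)) :
    ∀ x : Fin p → ℝ, (∀ i, 0 < x i) →
      Filter.Tendsto
        (fun t => (ENNReal.ofReal t)⁻¹ * laplace U (fun i => 1 / (b i t * x i)))
        Filter.atTop (nhds (laplace Uinf (fun i => 1 / x i))) :=
  stmt9_general U Uinf hsupp hfin γ b hb hRadonInf hvague hUI
end

section
/- (Sufficient condition for the uniform integrability condition) Suppose U is a measure on ℝ₊^p such that for each i, the marginal Uᵢ(x) := U(ℝ₊ × ⋯ × [0,x] × ⋯ × ℝ₊) is finite for all x and satisfies Uᵢ(bᵢ(t)x)/t → x^{γᵢ} as t → ∞ for all x > 0, with bᵢ ∈ RV_{1/γᵢ}, γᵢ > 0. Then for every x > 0 componentwise, lim_{y→∞} limsup_{t→∞} ∫_{∪ᵢ{vᵢ>y}} exp(-∑ᵢ vᵢ/xᵢ) Uₜ(dv) = 0, where Uₜ(·) = (1/t)U(b(t)·). -/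
open MeasureTheory Filter Set
open scoped ENNReal

/-!
Potter-type bounds turn the regular variation of `bᵢ` and of the `i`-th marginal into the
polynomial estimate `U{vᵢ ≤ bᵢ(t) z} ≤ 4 t z^{2γᵢ}` for `z ≥ 1`, uniformly in large `t`.
On `{vᵢ > y}` the weight `exp(-∑ⱼ vⱼ/xⱼ)` is at most `exp(-y/(2xᵢ)) exp(-vᵢ/(2xᵢ))`, and
integrating `exp(-vᵢ/(2xᵢ))` against `Uₜ` over the unit slabs `{⌊vᵢ⌋ = k}` is dominated by the
convergent series `Kᵢ = ∑ₖ exp(-k/(2xᵢ)) 4 (k+1)^{2γᵢ}`, independent of `t`. So the limsup is at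
most `∑ᵢ exp(-y/(2xᵢ)) Kᵢ`, which tends to `0` as `y → ∞`.
-/

theorem RegVarying.eventually_pow_mul_le {b : ℝ → ℝ} {ρ r : ℝ} (hb : RegVarying b ρ)
    (hr₀ : 0 ≤ r) (hr : r < 2 ^ ρ) :
    ∀ᶠ s in atTop, 0 < b s ∧ ∀ m : ℕ, r ^ m * b s ≤ b (2 ^ m * s) := by
  obtain ⟨T, hT⟩ := eventually_atTop.1 <|
    hb.1.and ((hb.2 2 two_pos).eventually_const_lt hr)
  have hstep : ∀ s, T ≤ s → r * b s ≤ b (2 * s) := fun s hs =>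
    (le_div_iff₀ (hT s hs).1).1 (hT s hs).2.le
  filter_upwards [eventually_ge_atTop (max T 0)] with s hs
  refine ⟨(hT s (le_of_max_le_left hs)).1, fun m => ?_⟩
  induction m generalizing s with
  | zero => simp
  | succ m ih =>
    have hs0 : 0 ≤ s := le_of_max_le_right hs
    calc r ^ (m + 1) * b s = r ^ m * (r * b s) := by ring
      _ ≤ r ^ m * b (2 * s) := by gcongr; exact hstep s (le_of_max_le_left hs)
      _ ≤ b (2 ^ m * (2 * s)) := ih (2 * s) (le_trans hs (by linarith))
      _ = b (2 ^ (m + 1) * s) := by ring_nf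

theorem RegVarying.potter_bound {F : ℝ → ℝ≥0∞} (hF : Monotone F) {γ : ℝ} (hγ : 0 < γ)
    {b : ℝ → ℝ} (hb : RegVarying b (1 / γ))
    (hFb : Tendsto (fun t => (ENNReal.ofReal t)⁻¹ * F (b t)) atTop (nhds 1)) :
    ∀ᶠ t in atTop, 0 < b t ∧
      ∀ z, 1 ≤ z → F (b t * z) ≤ ENNReal.ofReal t * ENNReal.ofReal (4 * z ^ (2 * γ)) := by
  -- `r` lies strictly below `2 ^ (1 / γ) = lim b (2 s) / b s`, and `r ^ (2 * γ) = 2`: each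
  -- doubling of `t` multiplies `b t` by at least `r`, which costs the exponent `2 * γ`.
  set r : ℝ := 2 ^ (1 / (2 * γ))
  have hr₀ : 0 < r := by positivity
  have hr₁ : 1 < r := Real.one_lt_rpow one_lt_two (by positivity)
  have hr₂ : r < 2 ^ (1 / γ) :=
    Real.rpow_lt_rpow_of_exponent_lt one_lt_two (by gcongr; linarith)
  have hrγ : r ^ (2 * γ) = 2 := by
    rw [← Real.rpow_mul zero_le_two, one_div_mul_cancel (by positivity), Real.rpow_one]
  obtain ⟨T, hT⟩ := eventually_atTop.1 <|
    (hFb.eventually_lt_const (by norm_num : (1 : ℝ≥0∞) < 2)).and (eventually_gt_atTop 0)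
  have hFT : ∀ s, T ≤ s → F (b s) ≤ ENNReal.ofReal s * 2 := fun s hs =>
    (ENNReal.inv_mul_le_iff (by simpa using (hT s hs).2) ENNReal.ofReal_ne_top).1
      (hT s hs).1.le
  filter_upwards [hb.eventually_pow_mul_le hr₀.le hr₂, eventually_ge_atTop (max T 0)]
    with t ⟨hbt, hpow⟩ ht
  refine ⟨hbt, fun z hz => ?_⟩
  obtain ⟨n, hnz, hzn⟩ := exists_nat_pow_near hz hr₁
  have ht₀ : 0 ≤ t := le_of_max_le_right ht
  have hm : (2 : ℝ) ^ (n + 1) ≤ 2 * z ^ (2 * γ) := by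
    calc (2 : ℝ) ^ (n + 1) = (r ^ (n + 1)) ^ (2 * γ) := by
          rw [← Real.rpow_natCast, ← Real.rpow_natCast, ← Real.rpow_mul hr₀.le, mul_comm,
            Real.rpow_mul hr₀.le, hrγ]
      _ ≤ (r * z) ^ (2 * γ) := by
          gcongr; rw [pow_succ']; exact mul_le_mul_of_nonneg_left hnz hr₀.le
      _ = 2 * z ^ (2 * γ) := by rw [Real.mul_rpow hr₀.le (by linarith), hrγ]
  calc F (b t * z) ≤ F (b (2 ^ (n + 1) * t)) :=
        hF <| (mul_le_mul_of_nonneg_left hzn.le hbt.le).trans (by linarith [hpow (n + 1)])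
    _ ≤ ENNReal.ofReal (2 ^ (n + 1) * t) * 2 :=
        hFT _ (le_trans (le_of_max_le_left ht) (le_mul_of_one_le_left ht₀ (one_le_pow₀ one_le_two)))
    _ ≤ ENNReal.ofReal t * ENNReal.ofReal (4 * z ^ (2 * γ)) := by
        rw [← ENNReal.ofReal_ofNat 2, ← ENNReal.ofReal_mul (by positivity),
          ← ENNReal.ofReal_mul ht₀]
        exact ENNReal.ofReal_le_ofReal (by nlinarith)

theorem summable_exp_neg_div_mul_rpow {c : ℝ} (hc : 0 < c) (e : ℝ) :
    Summable fun k : ℕ => Real.exp (-(k / c)) * ((k : ℝ) + 1) ^ e := by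
  have hlim : Tendsto (fun k : ℕ => ((k : ℝ) + 1) ^ e * Real.exp (-(1 / (2 * c)) * ((k : ℝ) + 1)))
      atTop (nhds 0) :=
    (tendsto_rpow_mul_exp_neg_mul_atTop_nhds_zero e _ (by positivity)).comp
      (tendsto_atTop_add_const_right _ 1 tendsto_natCast_atTop_atTop)
  have hgeom : Summable fun k : ℕ => Real.exp (1 / (2 * c)) * Real.exp (k * -(1 / (2 * c))) :=
    (Real.summable_exp_nat_mul_iff.2 (by simp [hc])).mul_left _
  refine hgeom.of_norm_bounded_eventually_nat ?_
  filter_upwards [hlim.eventually_le_const zero_lt_one] with k hk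
  rw [Real.norm_of_nonneg (by positivity)]
  calc Real.exp (-(k / c)) * ((k : ℝ) + 1) ^ e
      = ((k : ℝ) + 1) ^ e * Real.exp (-(1 / (2 * c)) * ((k : ℝ) + 1)) *
          (Real.exp (1 / (2 * c)) * Real.exp (k * -(1 / (2 * c)))) := by
        rw [mul_comm, mul_assoc, ← Real.exp_add, ← Real.exp_add]; congr 2; field_simp; ring
    _ ≤ Real.exp (1 / (2 * c)) * Real.exp (k * -(1 / (2 * c))) :=
        mul_le_of_le_one_left (by positivity) hk

noncomputable def slabSeries (c e : ℝ) : ℝ≥0∞ :=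
  ∑' k : ℕ, ENNReal.ofReal (Real.exp (-(k / c))) * ENNReal.ofReal (4 * ((k : ℝ) + 1) ^ e)

theorem slabSeries_ne_top {c : ℝ} (hc : 0 < c) (e : ℝ) : slabSeries c e ≠ ⊤ := by
  simp only [slabSeries, ← ENNReal.ofReal_mul (Real.exp_nonneg _)]
  rw [← ENNReal.ofReal_tsum_of_nonneg (fun k => by positivity)
    (((summable_exp_neg_div_mul_rpow hc e).mul_left 4).congr fun k => by ring)]
  exact ENNReal.ofReal_ne_top

theorem lintegral_exp_neg_div_le_tsum {Ω : Type*} [MeasurableSpace Ω] (μ : Measure Ω)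
    {u : Ω → ℝ} (hu : Measurable u) (hu₀ : ∀ᵐ ω ∂μ, 0 ≤ u ω) {c : ℝ} (hc : 0 < c) :
    ∫⁻ ω, ENNReal.ofReal (Real.exp (-(u ω / c))) ∂μ ≤
      ∑' k : ℕ, ENNReal.ofReal (Real.exp (-(k / c))) * μ {ω | u ω ≤ k + 1} := by
  set B : ℕ → Set Ω := fun k => {ω | ⌊u ω⌋₊ = k}
  have hB : ∀ k, MeasurableSet (B k) := fun k => hu.nat_floor (measurableSet_singleton k)
  calc ∫⁻ ω, ENNReal.ofReal (Real.exp (-(u ω / c))) ∂μ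
      ≤ ∫⁻ ω, ∑' k, (B k).indicator (fun _ => ENNReal.ofReal (Real.exp (-(k / c)))) ω ∂μ := by
        refine lintegral_mono_ae ?_
        filter_upwards [hu₀] with ω hω
        refine le_trans ?_ (ENNReal.le_tsum ⌊u ω⌋₊)
        rw [indicator_of_mem (by rfl)]
        gcongr
        exact Nat.floor_le hω
    _ = ∑' k : ℕ, ENNReal.ofReal (Real.exp (-(k / c))) * μ (B k) := by
        rw [lintegral_tsum fun k => (measurable_const.indicator (hB k)).aemeasurable]
        simp only [lintegral_indicator_const (hB _)]
    _ ≤ ∑' k : ℕ, ENNReal.ofReal (Real.exp (-(k / c))) * μ {ω | u ω ≤ k + 1} := by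
        gcongr with k
        intro ω hω
        exact (hω ▸ Nat.lt_floor_add_one (u ω)).le

theorem setLIntegral_exp_neg_sum_div_le {p : ℕ} (μ : Measure (Fin p → ℝ))
    (hμ : ∀ᵐ v ∂μ, ∀ i, 0 ≤ v i) {x : Fin p → ℝ} (hx : ∀ i, 0 < x i) (y : ℝ) :
    ∫⁻ v in {v | ∃ i, y < v i}, ENNReal.ofReal (Real.exp (-(∑ i, v i / x i))) ∂μ ≤
      ∑ i, ENNReal.ofReal (Real.exp (-(y / (2 * x i)))) *
        ∫⁻ v, ENNReal.ofReal (Real.exp (-(v i / (2 * x i)))) ∂μ := by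
  rw [show {v : Fin p → ℝ | ∃ i, y < v i} = ⋃ i, {v | y < v i} by ext; simp]
  refine (lintegral_iUnion_le _ _).trans ?_
  rw [tsum_fintype]
  gcongr with i
  rw [← lintegral_const_mul' _ _ ENNReal.ofReal_ne_top]
  refine le_trans (lintegral_mono_ae ?_) (setLIntegral_le_lintegral _ _)
  filter_upwards [ae_restrict_of_ae hμ, ae_restrict_mem₀ (measurableSet_lt measurable_const
    (measurable_pi_apply i)).nullMeasurableSet] with v hv hyv
  rw [← ENNReal.ofReal_mul (Real.exp_nonneg _), ← Real.exp_add]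
  gcongr
  have hsum : v i / x i ≤ ∑ j, v j / x j :=
    Finset.single_le_sum (fun j _ => div_nonneg (hv j) (hx j).le) (Finset.mem_univ i)
  have hyx : y / (2 * x i) ≤ v i / (2 * x i) :=
    div_le_div_of_nonneg_right hyv.le (by linarith [hx i])
  have : v i / x i = v i / (2 * x i) + v i / (2 * x i) := by field_simp; ring
  linarith

theorem rescaled_apply_setOf_le {p : ℕ} (U : Measure (Fin p → ℝ)) (b : Fin p → ℝ → ℝ) {t : ℝ}
    {i : Fin p} (hbt : 0 < b i t) (z : ℝ) :
    rescaled U b t {v | v i ≤ z} = (ENNReal.ofReal t)⁻¹ * U {v | v i ≤ b i t * z} := by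
  rw [rescaled, Measure.smul_apply, smul_eq_mul, Measure.map_apply
    (measurable_pi_lambda _ fun j => (measurable_pi_apply j).div_const _)
    (measurableSet_le (measurable_pi_apply i) measurable_const)]
  congr 2
  ext v
  simp [div_le_iff₀ hbt, mul_comm]

theorem ae_nonneg_rescaled {p : ℕ} {U : Measure (Fin p → ℝ)} (hU : ∀ᵐ v ∂U, ∀ i, 0 ≤ v i)
    {b : Fin p → ℝ → ℝ} {t : ℝ} (hbt : ∀ i, 0 ≤ b i t) :
    ∀ᵐ v ∂rescaled U b t, ∀ i, 0 ≤ v i := by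
  refine Measure.ae_smul_measure ?_ _
  rw [ae_map_iff (measurable_pi_lambda _ fun j => (measurable_pi_apply j).div_const _).aemeasurable
    (p := fun v => ∀ i, 0 ≤ v i) (by
      simpa only [ofPred_forall] using
        MeasurableSet.iInter fun i => measurableSet_le measurable_const (measurable_pi_apply i))]
  filter_upwards [hU] with v hv i
  exact div_nonneg (hv i) (hbt i)

theorem setLIntegral_rescaled_le_sum_slabSeries {p : ℕ} {U : Measure (Fin p → ℝ)}
    (hU : ∀ᵐ v ∂U, ∀ i, 0 ≤ v i) {γ : Fin p → ℝ} {b : Fin p → ℝ → ℝ} {t : ℝ} (ht : 0 < t)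
    (hbt : ∀ i, 0 < b i t ∧ ∀ z, 1 ≤ z →
      U {v | v i ≤ b i t * z} ≤ ENNReal.ofReal t * ENNReal.ofReal (4 * z ^ (2 * γ i)))
    {x : Fin p → ℝ} (hx : ∀ i, 0 < x i) (y : ℝ) :
    ∫⁻ v in {v | ∃ i, y < v i}, ENNReal.ofReal (Real.exp (-(∑ i, v i / x i))) ∂rescaled U b t ≤
      ∑ i, ENNReal.ofReal (Real.exp (-(y / (2 * x i)))) * slabSeries (2 * x i) (2 * γ i) := by
  have hUt := ae_nonneg_rescaled hU fun i => (hbt i).1.le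
  refine (setLIntegral_exp_neg_sum_div_le _ hUt hx y).trans (Finset.sum_le_sum fun i _ => ?_)
  refine mul_le_mul_right ?_ _
  refine (lintegral_exp_neg_div_le_tsum _ (measurable_pi_apply i) (hUt.mono fun v hv => hv i)
    (by linarith [hx i])).trans (ENNReal.tsum_le_tsum fun k => mul_le_mul_right ?_ _)
  rw [rescaled_apply_setOf_le U b (hbt i).1,
    ENNReal.inv_mul_le_iff (by simpa using ht) ENNReal.ofReal_ne_top]
  exact (hbt i).2 _ (by linarith [k.cast_nonneg (α := ℝ)])

theorem tendsto_sum_ofReal_exp_neg_div_mul {ι : Type*} [Fintype ι] {c : ι → ℝ}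
    (hc : ∀ i, 0 < c i) {K : ι → ℝ≥0∞} (hK : ∀ i, K i ≠ ⊤) :
    Tendsto (fun y : ℝ => ∑ i, ENNReal.ofReal (Real.exp (-(y / c i))) * K i) atTop (nhds 0) := by
  simpa using tendsto_finsetSum Finset.univ fun i _ => ENNReal.Tendsto.mul_const
    (ENNReal.tendsto_ofReal (Real.tendsto_exp_atBot.comp
      (tendsto_neg_atTop_atBot.comp (tendsto_id.atTop_div_const (hc i))))) (Or.inr (hK i))

theorem stmt10_general {p : ℕ} (U : Measure (Fin p → ℝ))
    (hsupp : U {x | ∃ i, x i < 0} = 0)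
    (γ : Fin p → ℝ) (hγ : ∀ i, 0 < γ i)
    (b : Fin p → ℝ → ℝ) (hb : ∀ i, RegVarying (b i) (1 / γ i))
    (hmarg : ∀ i, ∀ x : ℝ, 0 < x →
      Filter.Tendsto (fun t => (ENNReal.ofReal t)⁻¹ * U {v | v i ≤ b i t * x})
        Filter.atTop (nhds (ENNReal.ofReal (x ^ γ i)))) :
    ∀ x : Fin p → ℝ, (∀ i, 0 < x i) →
      Filter.Tendsto
        (fun y : ℝ => Filter.limsup
          (fun t => ∫⁻ v in {v : Fin p → ℝ | ∃ i, y < v i},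
            ENNReal.ofReal (Real.exp (-(∑ i, v i / x i))) ∂(rescaled U b t))
          Filter.atTop)
        Filter.atTop (nhds 0) := by
  intro x hx
  have hU : ∀ᵐ v ∂U, ∀ i, 0 ≤ v i := ae_iff.2 (by simpa only [not_forall, not_le] using hsupp)
  have hpotter := eventually_all.2 fun i => RegVarying.potter_bound
    (F := fun z => U {v | v i ≤ z}) (fun _ _ h => measure_mono fun _ hv => le_trans hv h)
    (hγ i) (hb i) (by simpa using hmarg i 1 one_pos)
  have h2x : ∀ i, 0 < 2 * x i := fun i => mul_pos two_pos (hx i)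
  refine tendsto_of_tendsto_of_tendsto_of_le_of_le tendsto_const_nhds
    (tendsto_sum_ofReal_exp_neg_div_mul h2x fun i => slabSeries_ne_top (h2x i) (2 * γ i))
    (fun _ => zero_le) fun y => limsup_le_of_le (by isBoundedDefault) ?_
  filter_upwards [hpotter, eventually_gt_atTop 0] with t hbt ht
  exact setLIntegral_rescaled_le_sum_slabSeries hU ht hbt hx y

/-- Sufficient condition for the uniform integrability condition: if each marginal
`Uᵢ(x) = U{v : vᵢ ≤ x}` is finite and satisfies `Uᵢ(bᵢ(t)x)/t → x^{γᵢ}`, then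
`lim_{y→∞} limsup_{t→∞} ∫_{∪ᵢ{vᵢ>y}} exp(-∑ᵢ vᵢ/xᵢ) Uₜ(dv) = 0` for all `x > 0`. -/
theorem stmt10 {p : ℕ} (U : Measure (Fin p → ℝ))
    (hsupp : U {x | ∃ i, x i < 0} = 0)
    (γ : Fin p → ℝ) (hγ : ∀ i, 0 < γ i)
    (b : Fin p → ℝ → ℝ) (hb : ∀ i, RegVarying (b i) (1 / γ i))
    (hmarg_fin : ∀ i, ∀ x : ℝ, U {v | v i ≤ x} < ⊤)
    (hmarg : ∀ i, ∀ x : ℝ, 0 < x →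
      Filter.Tendsto (fun t => (ENNReal.ofReal t)⁻¹ * U {v | v i ≤ b i t * x})
        Filter.atTop (nhds (ENNReal.ofReal (x ^ γ i)))) :
    ∀ x : Fin p → ℝ, (∀ i, 0 < x i) →
      Filter.Tendsto
        (fun y : ℝ => Filter.limsup
          (fun t => ∫⁻ v in {v : Fin p → ℝ | ∃ i, y < v i},
            ENNReal.ofReal (Real.exp (-(∑ i, v i / x i))) ∂(rescaled U b t))
          Filter.atTop)
        Filter.atTop (nhds 0) :=
  stmt10_general U hsupp γ hγ b hb hmarg
end

section
/- For λ₁, λ₂ > 0 and parameters c₁ > 0, a > 0, δin > 0, δout > 0, integer k ≥ 1, the Fubini-type identity holds: c₁⁻¹∏_{i=1}^k(δin+i) ∫₀^∞ z^{k-1-1/c₁}(1+zλ₁)^{-(δin+k+1)}(1+z^aλ₂)^{-δout} dz = ∫_{(0,∞)²} e^{-(λ₁v₁+λ₂v₂)} f_{1,k}(v₁,v₂) dv₁ dv₂, where f_{1,k}(x,y) = c₁⁻¹(Γ(δin+1)Γ(δout))⁻¹ x^{δin+k} y^{δout-1} ∫₀^∞ z^{-(2+1/c₁+δin+aδout)}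 e^{-(x/z+y/z^a)} dz. -/
open MeasureTheory Set

/-! Expanding `f_{1,k}`, the right-hand side is a triple integral of a nonnegative function over
`(v₁, v₂, z)`, so by Tonelli the `z`-integral can be taken outside; working with lower Lebesgue
integrals, this needs no integrability. For fixed `z` the `v₁`- and `v₂`-integrals separate into
gamma integrals `∫₀^∞ v^{s-1} e^{-r v} dv = Γ(s) r^{-s}` with `r = λ₁ + 1/z` and `r = λ₂ + z^{-a}`.
Since `(λ + 1/w)^{-s} = w^s (1 + wλ)^{-s}` and `Γ(δin + k + 1) = Γ(δin + 1) ∏_{i=1}^k (δin + i)`,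
the resulting `z`-integrand is the left-hand one. -/

/-- The density `f_{1,k}`. -/
noncomputable def f1k (c₁ a δin δout : ℝ) (k : ℕ) (x y : ℝ) : ℝ :=
  c₁⁻¹ * (Real.Gamma (δin + 1) * Real.Gamma δout)⁻¹ * x ^ (δin + (k : ℝ)) *
    y ^ (δout - 1) *
    ∫ z in Set.Ioi (0 : ℝ),
      z ^ (-(2 + 1 / c₁ + δin + a * δout)) * Real.exp (-(x / z + y / z ^ a))

section

open Real

theorem Real.Gamma_add_nat_eq_mul_prod {s : ℝ} (hs : 0 < s) (k : ℕ) :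
    Gamma (s + k) = Gamma s * ∏ i ∈ Finset.range k, (s + i) := by
  induction k with
  | zero => simp
  | succ n ih =>
    rw [Nat.cast_succ, ← add_assoc, Gamma_add_one (by positivity), ih, Finset.prod_range_succ]
    ring

theorem integrableOn_rpow_mul_exp_neg_mul_Ioi {s r : ℝ} (hs : 0 < s) (hr : 0 < r) :
    IntegrableOn (fun t : ℝ ↦ t ^ (s - 1) * exp (-(r * t))) (Ioi 0) :=
  Integrable.of_integral_ne_zero <| by
    rw [integral_rpow_mul_exp_neg_mul_Ioi hs hr]
    positivity

theorem lintegral_rpow_mul_exp_neg_mul_Ioi {s r : ℝ} (hs : 0 < s) (hr : 0 < r) :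
    ∫⁻ t in Ioi 0, ENNReal.ofReal (t ^ (s - 1) * exp (-(r * t))) =
      ENNReal.ofReal ((1 / r) ^ s * Gamma s) := by
  rw [← integral_rpow_mul_exp_neg_mul_Ioi hs hr, ofReal_integral_eq_lintegral_ofReal
    (integrableOn_rpow_mul_exp_neg_mul_Ioi hs hr)]
  filter_upwards [ae_restrict_mem measurableSet_Ioi] with t (ht : 0 < t)
  positivity

theorem integrableOn_rpow_mul_exp_neg_div_Ioi {A x : ℝ} (hA : A < -1) (hx : 0 < x) :
    IntegrableOn (fun z : ℝ ↦ z ^ A * exp (-(x / z))) (Ioi 0) := by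
  refine (integrableOn_Ioi_comp_rpow_iff' _ (p := -1) (by norm_num)).mp ?_
  refine (integrableOn_rpow_mul_exp_neg_mul_Ioi (s := -A - 1) (by linarith) hx).congr_fun
    (fun u (hu : 0 < u) ↦ ?_) measurableSet_Ioi
  rw [smul_eq_mul, rpow_neg_one, inv_rpow hu.le, div_inv_eq_mul, ← rpow_neg hu.le, ← mul_assoc,
    ← rpow_add hu]
  ring_nf

theorem one_div_add_one_div_rpow {w lam : ℝ} (hw : 0 < w) (hlam : 0 ≤ lam) (s : ℝ) :
    (1 / (lam + 1 / w)) ^ s = w ^ s * (1 + w * lam) ^ (-s) := by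
  have h : 1 / (lam + 1 / w) = w / (1 + w * lam) := by
    field_simp
    ring
  rw [h, div_rpow hw.le (by positivity), rpow_neg (by positivity), div_eq_mul_inv]

end

theorem lintegral_lintegral_mul_mul_prod {α β γ : Type*} [MeasurableSpace α] [MeasurableSpace β]
    [MeasurableSpace γ] {μ : Measure α} {ν : Measure β} {ρ : Measure γ} [SFinite μ] [SFinite ν]
    [SFinite ρ] {F : γ → ENNReal} {f : γ → α → ENNReal} {g : γ → β → ENNReal}
    (hF : Measurable F) (hf : Measurable (Function.uncurry f))
    (hg : Measurable (Function.uncurry g)) :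
    ∫⁻ v, ∫⁻ z, F z * (f z v.1 * g z v.2) ∂ρ ∂μ.prod ν =
      ∫⁻ z, F z * ((∫⁻ x, f z x ∂μ) * ∫⁻ y, g z y ∂ν) ∂ρ := by
  rw [lintegral_lintegral_swap (by fun_prop)]
  refine lintegral_congr fun z ↦ ?_
  rw [lintegral_const_mul _ (by fun_prop),
    lintegral_prod_mul hf.of_uncurry_left.aemeasurable hg.of_uncurry_left.aemeasurable]

section

open Real

variable {c₁ a δin δout : ℝ} {k : ℕ}

theorem measurable_f1k : Measurable (Function.uncurry (f1k c₁ a δin δout k)) := by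
  have hI : Measurable fun q : (ℝ × ℝ) × ℝ ↦
      q.2 ^ (-(2 + 1 / c₁ + δin + a * δout)) * exp (-(q.1.1 / q.2 + q.1.2 / q.2 ^ a)) := by
    fun_prop
  unfold Function.uncurry f1k
  exact (by fun_prop : Measurable fun v : ℝ × ℝ ↦ _).mul
    (hI.stronglyMeasurable.integral_prod_right' (ν := volume.restrict (Ioi 0))).measurable

theorem f1k_nonneg (hc : 0 ≤ c₁) (hin : 0 ≤ δin) (hout : 0 ≤ δout) {x y : ℝ} (hx : 0 ≤ x)
    (hy : 0 ≤ y) : 0 ≤ f1k c₁ a δin δout k x y := by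
  have hI : 0 ≤ ∫ z in Ioi (0 : ℝ),
      z ^ (-(2 + 1 / c₁ + δin + a * δout)) * exp (-(x / z + y / z ^ a)) :=
    setIntegral_nonneg measurableSet_Ioi fun z (hz : 0 < z) ↦ by positivity
  unfold f1k
  positivity

variable (lam₁ lam₂ : ℝ)

theorem ofReal_exp_mul_f1k (hc : 0 < c₁) (ha : 0 ≤ a) (hin : 0 ≤ δin) (hout : 0 ≤ δout)
    {x y : ℝ} (hx : 0 < x) (hy : 0 ≤ y) :
    ENNReal.ofReal (exp (-(lam₁ * x + lam₂ * y)) * f1k c₁ a δin δout k x y) =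
      ∫⁻ z in Ioi 0, ENNReal.ofReal (c₁⁻¹ * (Gamma (δin + 1) * Gamma δout)⁻¹ *
          z ^ (-(2 + 1 / c₁ + δin + a * δout))) *
        (ENNReal.ofReal (x ^ (δin + k) * exp (-((lam₁ + 1 / z) * x))) *
          ENNReal.ofReal (y ^ (δout - 1) * exp (-((lam₂ + 1 / z ^ a) * y)))) := by
  set A := -(2 + 1 / c₁ + δin + a * δout)
  set C₀ := c₁⁻¹ * (Gamma (δin + 1) * Gamma δout)⁻¹
  have hA : A < -1 := by
    have : 0 < 1 / c₁ := by positivity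
    have : 0 ≤ a * δout := by positivity
    linarith
  have hint : IntegrableOn (fun z ↦ z ^ A * exp (-(x / z + y / z ^ a))) (Ioi 0) := by
    refine (integrableOn_rpow_mul_exp_neg_div_Ioi hA hx).mono' (by fun_prop) ?_
    filter_upwards [ae_restrict_mem measurableSet_Ioi] with z (hz : 0 < z)
    rw [norm_of_nonneg (by positivity)]
    gcongr
    linarith [show 0 ≤ y / z ^ a by positivity]
  have hD : 0 ≤ exp (-(lam₁ * x + lam₂ * y)) * (C₀ * x ^ (δin + k) * y ^ (δout - 1)) := by
    positivity
  have hf1k : exp (-(lam₁ * x + lam₂ * y)) * f1k c₁ a δin δout k x y =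
      exp (-(lam₁ * x + lam₂ * y)) * (C₀ * x ^ (δin + k) * y ^ (δout - 1)) *
        ∫ z in Ioi 0, z ^ A * exp (-(x / z + y / z ^ a)) := by
    rw [f1k]
    ring
  rw [hf1k, ENNReal.ofReal_mul hD, ofReal_integral_eq_lintegral_ofReal hint ?nonneg,
    ← lintegral_const_mul' _ _ ENNReal.ofReal_ne_top]
  case nonneg =>
    filter_upwards [ae_restrict_mem measurableSet_Ioi] with z (hz : 0 < z)
    positivity
  refine setLIntegral_congr_fun measurableSet_Ioi fun z (hz : 0 < z) ↦ ?_
  have hexp : exp (-(lam₁ * x + lam₂ * y)) * exp (-(x / z + y / z ^ a)) =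
      exp (-((lam₁ + 1 / z) * x)) * exp (-((lam₂ + 1 / z ^ a) * y)) := by
    rw [← exp_add, ← exp_add]
    congr 1
    ring
  rw [← ENNReal.ofReal_mul hD, ← ENNReal.ofReal_mul (by positivity),
    ← ENNReal.ofReal_mul (by positivity)]
  congr 1
  linear_combination C₀ * x ^ (δin + k) * y ^ (δout - 1) * z ^ A * hexp

theorem lintegral_exp_mul_f1k (hc : 0 < c₁) (ha : 0 ≤ a) (hin : 0 ≤ δin) (hout : 0 < δout)
    (hlam₁ : 0 < lam₁) (hlam₂ : 0 < lam₂) :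
    ∫⁻ v in Ioi (0 : ℝ) ×ˢ Ioi (0 : ℝ),
        ENNReal.ofReal (exp (-(lam₁ * v.1 + lam₂ * v.2)) * f1k c₁ a δin δout k v.1 v.2) =
      ENNReal.ofReal (c₁⁻¹ * ∏ i ∈ Finset.range k, (δin + (i + 1))) *
        ∫⁻ z in Ioi 0, ENNReal.ofReal (z ^ ((k : ℝ) - 1 - 1 / c₁) *
          (1 + z * lam₁) ^ (-(δin + k + 1)) * (1 + z ^ a * lam₂) ^ (-δout)) := by
  have hΓ : Gamma (δin + k + 1) = Gamma (δin + 1) * ∏ i ∈ Finset.range k, (δin + (i + 1)) := by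
    rw [add_right_comm, Real.Gamma_add_nat_eq_mul_prod (by positivity)]
    exact congrArg _ (Finset.prod_congr rfl fun i _ ↦ by ring)
  rw [setLIntegral_congr_fun (measurableSet_Ioi.prod measurableSet_Ioi)
      fun v hv ↦ ofReal_exp_mul_f1k lam₁ lam₂ hc ha hin hout.le hv.1 (le_of_lt hv.2),
    Measure.volume_eq_prod, ← Measure.prod_restrict,
    ← lintegral_const_mul' _ _ ENNReal.ofReal_ne_top, lintegral_lintegral_mul_mul_prod
    (F := fun z ↦ ENNReal.ofReal (c₁⁻¹ * (Gamma (δin + 1) * Gamma δout)⁻¹ *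
      z ^ (-(2 + 1 / c₁ + δin + a * δout))))
    (f := fun z x ↦ ENNReal.ofReal (x ^ (δin + k) * exp (-((lam₁ + 1 / z) * x))))
    (g := fun z y ↦ ENNReal.ofReal (y ^ (δout - 1) * exp (-((lam₂ + 1 / z ^ a) * y))))
    (by fun_prop) (by fun_prop) (by fun_prop)]
  refine setLIntegral_congr_fun measurableSet_Ioi fun z (hz : 0 < z) ↦ ?_
  have hza : 0 < z ^ a := rpow_pos_of_pos hz a
  have hgamma₁ := lintegral_rpow_mul_exp_neg_mul_Ioi (s := δin + k + 1) (r := lam₁ + 1 / z)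
    (by positivity) (by positivity)
  rw [add_sub_cancel_right] at hgamma₁
  rw [hgamma₁, lintegral_rpow_mul_exp_neg_mul_Ioi hout (by positivity), ← ENNReal.ofReal_mul
    (by positivity), ← ENNReal.ofReal_mul (by positivity), ← ENNReal.ofReal_mul (by positivity)]
  congr 1
  have hpow : z ^ (-(2 + 1 / c₁ + δin + a * δout)) * (z ^ (δin + k + 1) * z ^ (a * δout)) =
      z ^ ((k : ℝ) - 1 - 1 / c₁) := by
    rw [← rpow_add hz, ← rpow_add hz]
    ring_nf
  have hΓin : Gamma (δin + 1) ≠ 0 := (Gamma_pos_of_pos (by positivity)).ne'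
  have hΓout : Gamma δout ≠ 0 := (Gamma_pos_of_pos hout).ne'
  rw [one_div_add_one_div_rpow hz hlam₁.le, one_div_add_one_div_rpow hza hlam₂.le,
    ← rpow_mul hz.le, hΓ, ← hpow]
  field_simp

end

theorem stmt17_general (c₁ a δin δout lam₁ lam₂ : ℝ) (k : ℕ)
    (hc : 0 < c₁) (ha : 0 < a) (hin : 0 < δin) (hout : 0 < δout)
    (hlam₁ : 0 < lam₁) (hlam₂ : 0 < lam₂) :
    c₁⁻¹ * (∏ i ∈ Finset.range k, (δin + (i + 1))) *
        ∫ z in Set.Ioi (0 : ℝ),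
          z ^ ((k : ℝ) - 1 - 1 / c₁) * (1 + z * lam₁) ^ (-(δin + k + 1)) *
            (1 + z ^ a * lam₂) ^ (-δout) =
      ∫ v in (Set.Ioi (0 : ℝ)) ×ˢ (Set.Ioi (0 : ℝ)),
        Real.exp (-(lam₁ * v.1 + lam₂ * v.2)) * f1k c₁ a δin δout k v.1 v.2 := by
  have hC : 0 ≤ c₁⁻¹ * ∏ i ∈ Finset.range k, (δin + ((i : ℝ) + 1)) := by positivity
  rw [integral_eq_lintegral_of_nonneg_ae ?nonneg_lhs ?meas_lhs,
    integral_eq_lintegral_of_nonneg_ae ?nonneg_rhs ?meas_rhs,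
    lintegral_exp_mul_f1k lam₁ lam₂ hc ha.le hin.le hout hlam₁ hlam₂, ENNReal.toReal_mul,
    ENNReal.toReal_ofReal hC]
  case nonneg_lhs =>
    filter_upwards [ae_restrict_mem measurableSet_Ioi] with z (hz : 0 < z)
    positivity
  case meas_lhs => fun_prop
  case nonneg_rhs =>
    filter_upwards [ae_restrict_mem (measurableSet_Ioi.prod measurableSet_Ioi)] with v ⟨hv₁, hv₂⟩
    have := f1k_nonneg (a := a) (k := k) hc.le hin.le hout.le (le_of_lt hv₁) (le_of_lt hv₂)
    positivity
  case meas_rhs => exact (Measurable.mul (by fun_prop) measurable_f1k).aestronglyMeasurable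

/-- Fubini-type identity:
`c₁⁻¹ ∏_{i=1}^k (δin+i) ∫₀^∞ z^{k-1-1/c₁}(1+zλ₁)^{-(δin+k+1)}(1+z^aλ₂)^{-δout} dz`
equals `∫∫_{(0,∞)²} e^{-(λ₁v₁+λ₂v₂)} f_{1,k}(v₁,v₂) dv₁dv₂`. -/
theorem stmt17 (c₁ a δin δout lam₁ lam₂ : ℝ) (k : ℕ)
    (hc : 0 < c₁) (ha : 0 < a) (hin : 0 < δin) (hout : 0 < δout)
    (hk : 1 ≤ k) (hkc : 1 / c₁ < k)
    (hlam₁ : 0 < lam₁) (hlam₂ : 0 < lam₂) :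
    c₁⁻¹ * (∏ i ∈ Finset.range k, (δin + (i + 1))) *
        ∫ z in Set.Ioi (0 : ℝ),
          z ^ ((k : ℝ) - 1 - 1 / c₁) * (1 + z * lam₁) ^ (-(δin + k + 1)) *
            (1 + z ^ a * lam₂) ^ (-δout) =
      ∫ v in (Set.Ioi (0 : ℝ)) ×ˢ (Set.Ioi (0 : ℝ)),
        Real.exp (-(lam₁ * v.1 + lam₂ * v.2)) * f1k c₁ a δin δout k v.1 v.2 :=
  stmt17_general c₁ a δin δout lam₁ lam₂ k hc ha hin hout hlam₁ hlam₂
end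

section
/- Let (X₁, Y₁) be a nonnegative integer-valued random vector whose probability generating function is φ₁(x,y) = c₁⁻¹∫₁^∞ z^{-(1+1/c₁)}(x+(1-x)z)^{-(δin+1)}(y+(1-y)z^a)^{-δout} dz with δin, δout > 0, c₁ = 1/(αin-1), a = (αin-1)/(αout-1). If k > αin - 1 is an integer, then E[X₁^k] = ∞. -/
/-!
If `E[X^k]` were finite, the `k`-th forward difference with step `h` of `G(x) = E[x^X]` would be
at most `E[X^k] h^k` on `[0, 1]`, because `Δ_h^k x^n ≤ n^k h^k` there by the mean value theorem.
On the other hand `G(x) = c₁⁻¹ ∫_{z > 1} z^{-(1+1/c₁)} (x + (1-x)z)^{-(δin+1)} dz`, and taking the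
difference under the integral at `x = 1 - 1/(T-1)`, `kh = 1/(T-1)`, the range `z ∈ (T/2, T]` alone
contributes order `T^{k - 1/c₁} h^k`. Since `k > 1/c₁ = αin - 1`, letting `T → ∞` is absurd.
Differences are used instead of derivatives so that only linearity of the integral is needed to
pass them under it.
-/

open MeasureTheory Set
open scoped ENNReal

noncomputable def phi1 (c₁ a δin δout : ℝ) (x y : ℝ) : ℝ :=
  c₁⁻¹ * ∫ z in Set.Ioi (1 : ℝ),
    z ^ (-(1 + 1 / c₁)) * (x + (1 - x) * z) ^ (-(δin + 1)) *
      (y + (1 - y) * z ^ a) ^ (-δout)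

open Filter Finset
open scoped fwdDiff

section FwdDiff

variable {h x : ℝ}

theorem fwdDiff_iter_eq_sum_mul (f : ℝ → ℝ) (n : ℕ) :
    Δ_[h] ^[n] f x = ∑ j ∈ range (n + 1), ((-1) ^ (n - j) * n.choose j : ℝ) * f (x + j * h) := by
  simp [fwdDiff_iter_eq_sum_shift, zsmul_eq_mul, nsmul_eq_mul]

theorem fwdDiff_iter_congr {f g : ℝ → ℝ} {n : ℕ}
    (hfg : ∀ j ≤ n, f (x + j * h) = g (x + j * h)) : Δ_[h] ^[n] f x = Δ_[h] ^[n] g x := by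
  simp only [fwdDiff_iter_eq_sum_mul]
  exact sum_congr rfl fun j hj => by rw [hfg j (Nat.lt_succ_iff.mp (mem_range.mp hj))]

theorem fwdDiff_iter_const_mul (c : ℝ) (f : ℝ → ℝ) (n : ℕ) :
    Δ_[h] ^[n] (fun t => c * f t) x = c * Δ_[h] ^[n] f x := by
  simp only [fwdDiff_iter_eq_sum_mul, mul_sum]
  exact sum_congr rfl fun _ _ => by ring

theorem integrable_fwdDiff_iter {α : Type*} [MeasurableSpace α] {ν : Measure α}
    {g : α → ℝ → ℝ} {n : ℕ} (hg : ∀ j ≤ n, Integrable (fun a => g a (x + j * h)) ν) :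
    Integrable (fun a => Δ_[h] ^[n] (g a) x) ν := by
  simp only [fwdDiff_iter_eq_sum_mul]
  exact integrable_finsetSum _ fun j hj =>
    (hg j (Nat.lt_succ_iff.mp (mem_range.mp hj))).const_mul _

theorem fwdDiff_iter_integral {α : Type*} [MeasurableSpace α] {ν : Measure α}
    {g : α → ℝ → ℝ} {n : ℕ} (hg : ∀ j ≤ n, Integrable (fun a => g a (x + j * h)) ν) :
    Δ_[h] ^[n] (fun y => ∫ a, g a y ∂ν) x = ∫ a, Δ_[h] ^[n] (g a) x ∂ν := by
  simp only [fwdDiff_iter_eq_sum_mul]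
  rw [integral_finsetSum _ fun j hj =>
    (hg j (Nat.lt_succ_iff.mp (mem_range.mp hj))).const_mul _]
  simp only [integral_const_mul]

theorem le_fwdDiff_iter_of_hasDerivAt {f : ℕ → ℝ → ℝ} {A : ℝ} {m : ℕ} (hh : 0 ≤ h)
    (hf : ∀ i < m, ∀ t ∈ Icc x (x + m * h), HasDerivAt (f i) (f (i + 1) t) t)
    (hA : ∀ t ∈ Icc x (x + m * h), A ≤ f m t) :
    A * h ^ m ≤ Δ_[h] ^[m] (f 0) x := by
  induction m generalizing f x A with
  | zero => simpa using hA x (by simp)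
  | succ m ih =>
    have hsub : ∀ t ∈ Icc x (x + m * h), Icc t (t + h) ⊆ Icc x (x + (m + 1 : ℕ) * h) := by
      intro t ht u hu
      push_cast
      constructor <;> nlinarith [ht.1, ht.2, hu.1, hu.2]
    have hstep : ∀ t ∈ Icc x (x + m * h), A * h ≤ f m (t + h) - f m t := by
      intro t ht
      have hd : ∀ u ∈ Icc t (t + h), HasDerivAt (f m) (f (m + 1) u) u :=
        fun u hu => hf m m.lt_succ_self u (hsub t ht hu)
      simpa using (convex_Icc t (t + h)).mul_sub_le_image_sub_of_le_deriv
        (fun u hu => (hd u hu).continuousAt.continuousWithinAt)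
        (fun u hu => (hd u (interior_subset hu)).differentiableAt.differentiableWithinAt)
        (fun u hu => (hd u (interior_subset hu)).deriv ▸
          hA u (hsub t ht (interior_subset hu)))
        t (left_mem_Icc.2 (by linarith)) (t + h) (right_mem_Icc.2 (by linarith)) (by linarith)
    have hchain : ∀ i < m, ∀ t ∈ Icc x (x + m * h),
        HasDerivAt (fun s => f i (s + h) - f i s) (f (i + 1) (t + h) - f (i + 1) t) t :=
      fun i hi t ht =>
        ((hf i (by omega) (t + h) (hsub t ht ⟨by linarith, le_rfl⟩)).comp_add_const t h).sub
          (hf i (by omega) t (hsub t ht ⟨le_rfl, by linarith⟩))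
    rw [Function.iterate_succ_apply, pow_succ', ← mul_assoc]
    exact ih (f := fun i s => f i (s + h) - f i s) hchain hstep

theorem fwdDiff_iter_le_of_hasDerivAt {f : ℕ → ℝ → ℝ} {B : ℝ} {m : ℕ} (hh : 0 ≤ h)
    (hf : ∀ i < m, ∀ t ∈ Icc x (x + m * h), HasDerivAt (f i) (f (i + 1) t) t)
    (hB : ∀ t ∈ Icc x (x + m * h), f m t ≤ B) :
    Δ_[h] ^[m] (f 0) x ≤ B * h ^ m := by
  have := le_fwdDiff_iter_of_hasDerivAt (f := fun i t => -f i t) (A := -B) hh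
    (fun i hi t ht => (hf i hi t ht).neg) (fun t ht => neg_le_neg (hB t ht))
  rw [show (fun t => -f 0 t) = fun t => -1 * f 0 t by simp, fwdDiff_iter_const_mul] at this
  linarith

end FwdDiff

theorem mul_le_setIntegral_Ioi_of_le_on_Ioc {f : ℝ → ℝ} {a b c d : ℝ}
    (hf : IntegrableOn f (Ioi a)) (hf0 : ∀ z ∈ Ioi a, 0 ≤ f z) (hab : a ≤ b) (hbc : b ≤ c)
    (hd : ∀ z ∈ Ioc b c, d ≤ f z) :
    (c - b) * d ≤ ∫ z in Ioi a, f z :=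
  calc (c - b) * d = ∫ _ in Ioc b c, d := by
        simp [Real.volume_real_Ioc_of_le hbc]
    _ ≤ ∫ z in Ioc b c, f z :=
        setIntegral_mono_on (integrableOn_const (by simp))
          (hf.mono_set fun z hz => lt_of_le_of_lt hab hz.1) measurableSet_Ioc hd
    _ ≤ ∫ z in Ioi a, f z :=
        setIntegral_mono_set hf ((ae_restrict_iff' measurableSet_Ioi).mpr (ae_of_all _ hf0))
          (LE.le.eventuallyLE fun z hz => lt_of_le_of_lt hab hz.1)

theorem fwdDiff_iter_pow_le {h x : ℝ} (hh : 0 ≤ h) (hx : 0 ≤ x) (n : ℕ) {k : ℕ}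
    (hxk : x + k * h ≤ 1) :
    Δ_[h] ^[k] (fun t => t ^ n) x ≤ n ^ k * h ^ k := by
  have hchain : ∀ i < k, ∀ t ∈ Icc x (x + k * h),
      HasDerivAt (fun t : ℝ => (n.descFactorial i : ℝ) * t ^ (n - i))
        ((n.descFactorial (i + 1) : ℝ) * t ^ (n - (i + 1))) t := by
    intro i _ t _
    refine ((hasDerivAt_pow (n - i) t).const_mul (n.descFactorial i : ℝ)).congr_deriv ?_
    rw [Nat.descFactorial_succ, Nat.sub_sub]
    push_cast
    ring
  have hbound : ∀ t ∈ Icc x (x + k * h), (n.descFactorial k : ℝ) * t ^ (n - k) ≤ n ^ k := by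
    intro t ht
    have ht0 : 0 ≤ t := hx.trans ht.1
    calc (n.descFactorial k : ℝ) * t ^ (n - k) ≤ n.descFactorial k * 1 :=
          mul_le_mul_of_nonneg_left (pow_le_one₀ ht0 (ht.2.trans hxk)) (Nat.cast_nonneg _)
      _ ≤ n ^ k := by rw [mul_one]; exact_mod_cast Nat.descFactorial_le_pow n k
  simpa using fwdDiff_iter_le_of_hasDerivAt hh hchain hbound

theorem fwdDiff_iter_integral_pow_le {Ω : Type*} [MeasurableSpace Ω] {μ : Measure Ω}
    [IsFiniteMeasure μ] {X : Ω → ℕ} (hX : Measurable X) {k : ℕ}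
    (hXk : Integrable (fun ω => (X ω : ℝ) ^ k) μ) {h x : ℝ} (hh : 0 ≤ h) (hx : 0 ≤ x)
    (hxk : x + k * h ≤ 1) :
    Δ_[h] ^[k] (fun y => ∫ ω, y ^ X ω ∂μ) x ≤ (∫ ω, (X ω : ℝ) ^ k ∂μ) * h ^ k := by
  have hint : ∀ j ≤ k, Integrable (fun ω => (x + j * h) ^ X ω) μ := by
    intro j hj
    have h0 : 0 ≤ x + j * h := by positivity
    have h1 : x + j * h ≤ 1 := le_trans (by gcongr) hxk
    refine Integrable.of_bound ((measurable_from_nat (f := fun n : ℕ => (x + j * h) ^ n)).comp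
      hX).aestronglyMeasurable 1 (ae_of_all _ fun ω => ?_)
    rw [Real.norm_eq_abs, abs_pow, abs_of_nonneg h0]
    exact pow_le_one₀ h0 h1
  rw [fwdDiff_iter_integral (g := fun ω y => y ^ X ω) hint, ← integral_mul_const]
  exact integral_mono (integrable_fwdDiff_iter hint) (hXk.mul_const _) fun ω =>
    fwdDiff_iter_pow_le hh hx _ hxk

noncomputable def pgfKernel (e p z x : ℝ) : ℝ := z ^ e * (x + (1 - x) * z) ^ (-p)

theorem phi1_one_right (c₁ a δin δout x : ℝ) :
    phi1 c₁ a δin δout x 1 = c₁⁻¹ * ∫ z in Ioi 1, pgfKernel (-(1 + 1 / c₁)) (δin + 1) z x := by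
  simp [phi1, pgfKernel]

theorem integrableOn_pgfKernel {e p x : ℝ} (he : e < -1) (hp : 0 ≤ p) (hx : x ≤ 1) :
    IntegrableOn (fun z => pgfKernel e p z x) (Ioi 1) := by
  refine (integrableOn_Ioi_rpow_of_lt he one_pos).mono' ?_ ?_
  · have : Measurable fun z => pgfKernel e p z x := by unfold pgfKernel; fun_prop
    exact this.aestronglyMeasurable
  · refine (ae_restrict_iff' measurableSet_Ioi).mpr (ae_of_all _ fun z hz => ?_)
    have hz : 1 < z := hz
    have hbase : 1 ≤ x + (1 - x) * z := by nlinarith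
    have hze : 0 ≤ z ^ e := Real.rpow_nonneg (by linarith) e
    rw [pgfKernel, Real.norm_of_nonneg (mul_nonneg hze (Real.rpow_nonneg (by linarith) _))]
    exact mul_le_of_le_one_right hze (Real.rpow_le_one_of_one_le_of_nonpos hbase (by linarith))

theorem le_fwdDiff_iter_pgfKernel {e p z h x : ℝ} {k : ℕ} (hp : 0 ≤ p) (hz : 1 ≤ z)
    (hh : 0 ≤ h) (hxk : x + k * h ≤ 1) :
    (∏ j ∈ range k, (p + j)) * z ^ e * (z - 1) ^ k * (x + (1 - x) * z) ^ (-(p + k)) * h ^ k ≤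
      Δ_[h] ^[k] (pgfKernel e p z) x := by
  set f : ℕ → ℝ → ℝ := fun i t =>
    (∏ j ∈ range i, (p + j)) * z ^ e * (z - 1) ^ i * (t + (1 - t) * z) ^ (-(p + i)) with hf
  have hbase : ∀ t ∈ Icc x (x + k * h), 1 ≤ t + (1 - t) * z := fun t ht => by
    nlinarith [ht.2]
  have hchain : ∀ i < k, ∀ t ∈ Icc x (x + k * h), HasDerivAt (f i) (f (i + 1) t) t := by
    intro i _ t ht
    have hB : HasDerivAt (fun t : ℝ => t + (1 - t) * z) (1 - z) t := by
      refine ((hasDerivAt_id' t).add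
        (((hasDerivAt_const t 1).sub (hasDerivAt_id' t)).mul_const z)).congr_deriv ?_
      ring
    refine ((hB.rpow_const (p := -(p + i)) (Or.inl (by linarith [hbase t ht]))).const_mul
      ((∏ j ∈ range i, (p + j)) * z ^ e * (z - 1) ^ i)).congr_deriv ?_
    simp only [hf, prod_range_succ, pow_succ]
    rw [show -(p + ((i + 1 : ℕ) : ℝ)) = -(p + i) - 1 by push_cast; ring]
    ring
  have hbound : ∀ t ∈ Icc x (x + k * h),
      (∏ j ∈ range k, (p + j)) * z ^ e * (z - 1) ^ k * (x + (1 - x) * z) ^ (-(p + k)) ≤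
        f k t := by
    intro t ht
    have hC : 0 ≤ (∏ j ∈ range k, (p + j)) * z ^ e * (z - 1) ^ k :=
      mul_nonneg (mul_nonneg (prod_nonneg fun j _ => by positivity)
        (Real.rpow_nonneg (by linarith) e)) (pow_nonneg (by linarith) k)
    exact mul_le_mul_of_nonneg_left (Real.rpow_le_rpow_of_nonpos (by linarith [hbase t ht])
      (by nlinarith [ht.1]) (by linarith [(Nat.cast_nonneg k : (0:ℝ) ≤ k)])) hC
  have hf0 : f 0 = pgfKernel e p z := by
    funext t
    simp [f, pgfKernel]
  simpa [hf0] using le_fwdDiff_iter_of_hasDerivAt hh hchain hbound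

theorem exists_fwdDiff_iter_integral_pgfKernel_ge {e p : ℝ} (he : e < -1) (hp : 0 < p) {k : ℕ}
    (hk : 0 < k) :
    ∃ K > (0 : ℝ), ∀ T ≥ (4 : ℝ), ∃ x h : ℝ, 0 ≤ x ∧ 0 < h ∧ x + k * h = 1 ∧
      K * T ^ (e + k + 1) * h ^ k ≤ Δ_[h] ^[k] (fun y => ∫ z in Ioi 1, pgfKernel e p z y) x := by
  set c := ∏ j ∈ range k, (p + j)
  have hc : 0 < c := prod_pos fun j _ => by positivity
  refine ⟨c * 2 ^ (-(p + k)) / (2 * 4 ^ k), by positivity, fun T hT => ?_⟩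
  have hT0 : 0 < T := by linarith
  set ε : ℝ := (T - 1)⁻¹
  have hε0 : 0 < ε := inv_pos.2 (by linarith)
  have hεT : ε * (T - 1) = 1 := inv_mul_cancel₀ (by linarith)
  have hε1 : ε ≤ 1 := inv_le_one_of_one_le₀ (by linarith)
  set h : ℝ := ε / k
  have hh : 0 < h := by positivity
  have hxh : 1 - ε + k * h = 1 := by
    simp only [h]
    field_simp
    ring
  refine ⟨1 - ε, h, by linarith, hh, hxh, ?_⟩
  have hint : ∀ j ≤ k, IntegrableOn (fun z => pgfKernel e p z (1 - ε + j * h)) (Ioi 1) :=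
    fun j hj => integrableOn_pgfKernel he hp.le
      (by nlinarith [mul_le_mul_of_nonneg_right (Nat.cast_le.2 hj : (j : ℝ) ≤ k) hh.le])
  have hlow : ∀ z ∈ Ioi (1 : ℝ), c * z ^ e * (z - 1) ^ k * (1 + ε * (z - 1)) ^ (-(p + k)) * h ^ k
      ≤ Δ_[h] ^[k] (pgfKernel e p z) (1 - ε) := fun z hz => by
    convert le_fwdDiff_iter_pgfKernel hp.le (le_of_lt hz) hh.le hxh.le using 4
    ring
  rw [fwdDiff_iter_integral hint]
  refine le_trans (le_of_eq ?_) (mul_le_setIntegral_Ioi_of_le_on_Ioc (b := T / 2) (c := T)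
    (d := c * T ^ e * (T / 4) ^ k * 2 ^ (-(p + k)) * h ^ k)
    (integrable_fwdDiff_iter hint) (fun z hz => le_trans ?_ (hlow z hz)) (by linarith)
    (by linarith) fun z hz => le_trans ?_ (hlow z (mem_Ioi.2 (by linarith [hz.1]))))
  · rw [Real.rpow_add hT0, Real.rpow_add hT0, Real.rpow_natCast, Real.rpow_one, div_pow T]
    field_simp
    ring
  · have hz : 0 ≤ z - 1 := sub_nonneg.2 (le_of_lt hz)
    have hεz : 0 ≤ 1 + ε * (z - 1) := by nlinarith
    exact mul_nonneg (mul_nonneg (mul_nonneg (mul_nonneg hc.le (Real.rpow_nonneg (by linarith) e))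
      (pow_nonneg hz k)) (Real.rpow_nonneg hεz _)) (pow_nonneg hh.le k)
  · obtain ⟨hz1, hz2⟩ := hz
    have hz0 : 0 < z := by linarith
    have hzT : T ^ e ≤ z ^ e := Real.rpow_le_rpow_of_nonpos hz0 hz2 (by linarith)
    have hz4 : (T / 4) ^ k ≤ (z - 1) ^ k := pow_le_pow_left₀ (by linarith) (by linarith) k
    have h2 : (2 : ℝ) ^ (-(p + k)) ≤ (1 + ε * (z - 1)) ^ (-(p + k)) :=
      Real.rpow_le_rpow_of_nonpos (by nlinarith) (by nlinarith) (neg_nonpos.2 (by positivity))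
    gcongr
    exact mul_nonneg (mul_nonneg hc.le (Real.rpow_nonneg hz0.le e)) (pow_nonneg (by linarith) k)

theorem exists_mul_rpow_le_integral_pow_of_pgf {Ω : Type*} [MeasurableSpace Ω] {μ : Measure Ω}
    [IsFiniteMeasure μ] {X : Ω → ℕ} (hX : Measurable X) {k : ℕ} (hk : 0 < k)
    (hXk : Integrable (fun ω => (X ω : ℝ) ^ k) μ) {c e p : ℝ} (hc : 0 < c) (he : e < -1)
    (hp : 0 < p)
    (hG : ∀ x : ℝ, 0 ≤ x → x ≤ 1 → ∫ ω, x ^ X ω ∂μ = c * ∫ z in Ioi 1, pgfKernel e p z x) :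
    ∃ K > (0 : ℝ), ∀ T ≥ (4 : ℝ), K * T ^ (e + k + 1) ≤ ∫ ω, (X ω : ℝ) ^ k ∂μ := by
  obtain ⟨K, hK, hKT⟩ := exists_fwdDiff_iter_integral_pgfKernel_ge he hp hk
  refine ⟨c * K, by positivity, fun T hT => ?_⟩
  obtain ⟨x, h, hx, hh, hxh, hlow⟩ := hKT T hT
  have hΔG : Δ_[h] ^[k] (fun y => ∫ ω, y ^ X ω ∂μ) x =
      c * Δ_[h] ^[k] (fun y => ∫ z in Ioi 1, pgfKernel e p z y) x := by
    rw [← fwdDiff_iter_const_mul]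
    refine fwdDiff_iter_congr fun j hj => hG _ (by positivity) ?_
    nlinarith [mul_le_mul_of_nonneg_right (Nat.cast_le.2 hj : (j : ℝ) ≤ k) hh.le]
  refine le_of_mul_le_mul_right ?_ (pow_pos hh k)
  calc c * K * T ^ (e + k + 1) * h ^ k
      ≤ c * Δ_[h] ^[k] (fun y => ∫ z in Ioi 1, pgfKernel e p z y) x := by
        simpa only [mul_assoc] using mul_le_mul_of_nonneg_left hlow hc.le
    _ = Δ_[h] ^[k] (fun y => ∫ ω, y ^ X ω ∂μ) x := hΔG.symm
    _ ≤ (∫ ω, (X ω : ℝ) ^ k ∂μ) * h ^ k := fwdDiff_iter_integral_pow_le hX hXk hh.le hx hxh.le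

theorem stmt18_general {Ω : Type*} [MeasurableSpace Ω] (μ : Measure Ω) [IsProbabilityMeasure μ]
    (X Y : Ω → ℕ) (hX : Measurable X)
    (c₁ a δin δout αin : ℝ)
    (hc₁ : 0 < c₁) (hin : 0 < δin)
    (hαin : αin = 1 + 1 / c₁)
    (hpgf : ∀ x y : ℝ, 0 ≤ x → x ≤ 1 → 0 ≤ y → y ≤ 1 →
      ∫ ω, x ^ (X ω) * y ^ (Y ω) ∂μ = phi1 c₁ a δin δout x y)
    (k : ℕ) (hk : αin - 1 < k) :
    ∫⁻ ω, ((X ω : ℝ≥0∞)) ^ k ∂μ = ⊤ := by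
  by_contra hM
  have hc₁' : 0 < 1 / c₁ := one_div_pos.2 hc₁
  have hθ : 0 < -(1 + 1 / c₁) + k + 1 := by linarith
  have hXk : Integrable (fun ω => (X ω : ℝ) ^ k) μ := by
    simpa using integrable_toReal_of_lintegral_ne_top
      ((measurable_from_nat (f := fun n : ℕ => (n : ℝ≥0∞) ^ k)).comp hX).aemeasurable hM
  obtain ⟨K, hK, hKT⟩ := exists_mul_rpow_le_integral_pow_of_pgf hX
    (by exact_mod_cast (by linarith : (0 : ℝ) < k)) hXk (inv_pos.2 hc₁)
    (by linarith : -(1 + 1 / c₁) < -1) (by linarith : 0 < δin + 1) fun x h0 h1 => by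
      simpa only [one_pow, mul_one, phi1_one_right] using hpgf x 1 h0 h1 zero_le_one le_rfl
  obtain ⟨T, hTM, hT4⟩ := ((tendsto_rpow_atTop hθ).const_mul_atTop hK
    |>.eventually_gt_atTop _ |>.and (eventually_ge_atTop 4)).exists
  exact (hKT T hT4).not_gt hTM

/-- If `(X₁, Y₁)` is a nonnegative integer-valued random vector with probability
generating function `φ₁` (with `c₁ = 1/(αin-1)`, i.e. `αin = 1 + 1/c₁`), then for any
integer `k > αin - 1` the `k`-th moment of `X₁` is infinite. -/
theorem stmt18 {Ω : Type*} [MeasurableSpace Ω] (μ : Measure Ω) [IsProbabilityMeasure μ]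
    (X Y : Ω → ℕ) (hX : Measurable X) (hY : Measurable Y)
    (c₁ a δin δout αin : ℝ)
    (hc₁ : 0 < c₁) (ha : 0 < a) (hin : 0 < δin) (hout : 0 < δout)
    (hαin : αin = 1 + 1 / c₁)
    (hpgf : ∀ x y : ℝ, 0 ≤ x → x ≤ 1 → 0 ≤ y → y ≤ 1 →
      ∫ ω, x ^ (X ω) * y ^ (Y ω) ∂μ = phi1 c₁ a δin δout x y)
    (k : ℕ) (hk : αin - 1 < k) :
    ∫⁻ ω, ((X ω : ℝ≥0∞)) ^ k ∂μ = ⊤ :=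
  stmt18_general μ X Y hX c₁ a δin δout αin hc₁ hin hαin hpgf k hk
end
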